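/- arXiv:math/0607270 — 13 statements merged into one kernel-verified Lean document; each statement's English description precedes it below -/
import Mathlib

section
/- Let K be a field of characteristic zero and let W be the Witt algebra over K. Then W is a simple Lie algebra: W is not abelian and its only Lie ideals are 0 and W. -/
/-!
`ad (ℓ 0)` acts diagonally on the basis, `⁅ℓ 0, ℓ k⁆ = -k • ℓ k`, with pairwise distinct eigenvalues
because the characteristic is zero. Applying `ad (ℓ 0) + m` to an element of an ideal kills its
`ℓ m`-coordinate and rescales the others by nonzero factors, so shrinking supports shows that a
nonzero ideal contains some `ℓ m`. Bracketing with `ℓ (k - m)` then gives `(k - 2m) • ℓ k`, so the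
ideal contains every `ℓ k` with `k ≠ 2m`; in particular it contains `ℓ 0`, and from `ℓ 0` every `ℓ k`.
-/

namespace Module.Basis

variable {ι K V : Type*} [Field K] [AddCommGroup V] [Module K V]
  (b : Basis ι K V) {f : V →ₗ[K] V} {μ : ι → K}

theorem repr_apply_of_apply_eq_smul (hf : ∀ i, f (b i) = μ i • b i) (z : V) (i : ι) :
    b.repr (f z) i = μ i * b.repr z i := by
  have : b.coord i ∘ₗ f = μ i • b.coord i := b.ext fun j ↦ by
    by_cases hij : j = i
    · subst hij; simp [hf]
    · simp [hf, Ne.symm hij]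
  simpa using LinearMap.congr_fun this z

theorem support_repr_sub_smul_eq_erase [DecidableEq ι] (hμ : Function.Injective μ)
    (hf : ∀ i, f (b i) = μ i • b i) (z : V) (m : ι) :
    (b.repr (f z - μ m • z)).support = (b.repr z).support.erase m := by
  ext k
  have : b.repr (f z - μ m • z) k = (μ k - μ m) * b.repr z k := by
    simp [b.repr_apply_of_apply_eq_smul hf, sub_mul]
  rw [Finset.mem_erase]
  simp only [Finsupp.mem_support_iff, this, ne_eq, mul_eq_zero, sub_eq_zero,
    not_or, hμ.eq_iff]

theorem mem_of_support_repr_eq_singleton {p : Submodule K V} {z : V} (hz : z ∈ p) {i : ι}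
    (hsupp : (b.repr z).support = {i}) : b i ∈ p := by
  obtain ⟨hc, hsingle⟩ := Finsupp.support_eq_singleton.mp hsupp
  have hz_eq : z = b.repr z i • b i := by
    rw [← b.repr_symm_single, ← hsingle, b.repr.symm_apply_apply]
  rw [hz_eq] at hz
  exact (p.smul_mem_iff hc).mp hz

theorem exists_mem_of_invariant (hμ : Function.Injective μ) (hf : ∀ i, f (b i) = μ i • b i)
    {p : Submodule K V} (hp : ∀ x ∈ p, f x ∈ p) (hp_ne : p ≠ ⊥) : ∃ i, b i ∈ p := by
  classical
  suffices h : ∀ n : ℕ, ∀ z ∈ p, (b.repr z).support.card = n + 1 → ∃ i, b i ∈ p by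
    obtain ⟨z, hz, hz0⟩ := p.ne_bot_iff.mp hp_ne
    have hcard : (b.repr z).support.card ≠ 0 := by simpa using hz0
    exact h _ z hz (Nat.succ_pred_eq_of_ne_zero hcard).symm
  intro n
  induction n with
  | zero =>
    intro z hz hcard
    obtain ⟨i, hi⟩ := Finset.card_eq_one.mp hcard
    exact ⟨i, b.mem_of_support_repr_eq_singleton hz hi⟩
  | succ n ih =>
    intro z hz hcard
    obtain ⟨m, hm⟩ := Finset.card_pos.mp (by omega : 0 < (b.repr z).support.card)
    refine ih (f z - μ m • z) (p.sub_mem (hp z hz) (p.smul_mem _ hz)) ?_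
    rw [b.support_repr_sub_smul_eq_erase hμ hf, Finset.card_erase_of_mem hm, hcard]
    rfl

end Module.Basis

section Witt

variable {K W : Type*} [Field K] [CharZero K] [LieRing W] [LieAlgebra K W]
  {ℓ : Module.Basis ℤ K W} (hbr : ∀ n m : ℤ, ⁅ℓ n, ℓ m⁆ = ((n - m : ℤ) : K) • ℓ (n + m))
include hbr

theorem witt_exists_basis_mem {I : LieIdeal K W} (hI : I ≠ ⊥) : ∃ m, ℓ m ∈ I := by
  refine ℓ.exists_mem_of_invariant (f := LieAlgebra.ad K W (ℓ 0)) (μ := fun k ↦ ((-k : ℤ) : K))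
    (fun a b h ↦ by simpa using h) (fun k ↦ by simp [hbr]) (fun x hx ↦ I.lie_mem hx) ?_
  rwa [Ne, ← LieSubmodule.toSubmodule_eq_bot] at hI

theorem witt_basis_mem_of_ne {I : LieIdeal K W} {m : ℤ} (hm : ℓ m ∈ I) {k : ℤ}
    (hk : k ≠ 2 * m) : ℓ k ∈ I := by
  have hbracket : ⁅ℓ (k - m), ℓ m⁆ = ((k - 2 * m : ℤ) : K) • ℓ k := by
    rw [hbr, sub_add_cancel, sub_sub, ← two_mul]
  have hne : ((k - 2 * m : ℤ) : K) ≠ 0 := Int.cast_ne_zero.mpr (sub_ne_zero.mpr hk)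
  exact (I.smul_mem_iff hne).mp (hbracket ▸ I.lie_mem hm)

theorem witt_basis_mem {I : LieIdeal K W} {m : ℤ} (hm : ℓ m ∈ I) (k : ℤ) : ℓ k ∈ I := by
  have h0 : ℓ 0 ∈ I := by
    by_cases hm0 : m = 0
    · exact hm0 ▸ hm
    · exact witt_basis_mem_of_ne hbr hm (by omega)
  by_cases hk : k = 0
  · exact hk ▸ h0
  · exact witt_basis_mem_of_ne hbr h0 (by omega)

end Witt

/-- **The Witt algebra is simple.**
Over a field `K` of characteristic zero, any Lie algebra `W` with a basis
`ℓ : ℤ → W` satisfying `⁅ℓ n, ℓ m⁆ = (n - m) • ℓ (n + m)` (i.e. the Witt algebra)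
is a simple Lie algebra: it is not abelian and its only Lie ideals are `⊥` and `⊤`. -/
theorem witt_algebra_is_simple
    (K : Type*) [Field K] [CharZero K]
    (W : Type*) [LieRing W] [LieAlgebra K W]
    (ℓ : Module.Basis ℤ K W)
    (hbr : ∀ n m : ℤ, ⁅ℓ n, ℓ m⁆ = ((n - m : ℤ) : K) • ℓ (n + m)) :
    (¬ ∀ x y : W, ⁅x, y⁆ = 0) ∧ ∀ I : LieIdeal K W, I = ⊥ ∨ I = ⊤ := by
  refine ⟨fun habelian ↦ ℓ.ne_zero 1 ?_, fun I ↦ or_iff_not_imp_left.mpr fun hI ↦ ?_⟩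
  · simpa [hbr] using habelian (ℓ 1) (ℓ 0)
  obtain ⟨m, hm⟩ := witt_exists_basis_mem hbr hI
  rw [← LieSubmodule.toSubmodule_eq_top, eq_top_iff, ← ℓ.span_eq, Submodule.span_le]
  rintro _ ⟨k, rfl⟩
  exact witt_basis_mem hbr hm k
end

section
/- Let K be a field of characteristic zero, W the Witt algebra over K, and h a K-vector space. Let c : ℤ → h satisfy c_{−n} = −c_n for all n, and let ε : W × W → h be the alternating bilinear map determined by ε(ℓ_n, ℓ_m) = c_n δ_{n+m,0}. Then ε satisfies the 2-cocycle condition ε([x,y],z) + ε([z,x],y) + ε([y,z],x) = 0 for all x,y,z ∈ W if and only if there exist a, b ∈ h with c_n = n³·a + n·b for all n ∈ ℤ. Moreover, in that case ε is a coboundary (there exists a linear map f : W → h with ε(x,y) = −f([x,y]) for all x,y) if and only if a = 0. -/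
/-! Both conditions are multilinear, so it suffices to check them on basis vectors. On
`(ℓ n, ℓ m, ℓ k)` the cocycle condition is vacuous unless `k = -n - m`, and there, using
`c (-n) = -c n`, it becomes the recurrence `WittCocycleEquation`. Every `n ↦ n³ a + n b` solves it;
conversely the recurrence at `(n, 1)` reads `(n - 1) c (n + 1) = (n + 2) c n - (2n + 1) c 1`, so
an odd solution is determined by `c 1` and `c 2`, which a cubic of this shape can match.
A coboundary `-f ⁅·, ·⁆` has `c n = -f ⁅ℓ n, ℓ (-n)⁆ = -2n f (ℓ 0)`, linear in `n`, and
`n³ a + n b` is linear in `n` exactly when `a = 0`. -/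

section LieAlgebra

variable {R L M ι : Type*} [CommRing R] [LieRing L] [LieAlgebra R L] [AddCommGroup M] [Module R M]

def lieCyclicSum (ε : L →ₗ[R] L →ₗ[R] M) : L →ₗ[R] L →ₗ[R] L →ₗ[R] M where
  toFun x :=
    { toFun y :=
        { toFun z := ε ⁅x, y⁆ z + ε ⁅z, x⁆ y + ε ⁅y, z⁆ x
          map_add' _ _ := by
            simp only [map_add, add_lie, lie_add, LinearMap.add_apply]
            abel
          map_smul' _ _ := by simp }
      map_add' _ _ := by
        ext
        simp only [map_add, add_lie, lie_add, LinearMap.add_apply, LinearMap.coe_mk, AddHom.coe_mk]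
        abel
      map_smul' _ _ := by ext; simp }
  map_add' _ _ := by
    ext
    simp only [map_add, add_lie, lie_add, LinearMap.add_apply, LinearMap.coe_mk, AddHom.coe_mk]
    abel
  map_smul' _ _ := by ext; simp

theorem forall_cyclic_lie_eq_zero_iff_basis (b : Module.Basis ι R L) (ε : L →ₗ[R] L →ₗ[R] M) :
    (∀ x y z : L, ε ⁅x, y⁆ z + ε ⁅z, x⁆ y + ε ⁅y, z⁆ x = 0) ↔
      ∀ i j k : ι, ε ⁅b i, b j⁆ (b k) + ε ⁅b k, b i⁆ (b j) + ε ⁅b j, b k⁆ (b i) = 0 := by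
  refine ⟨fun H i j k ↦ H _ _ _, fun H x y z ↦ ?_⟩
  have : lieCyclicSum ε = 0 := LinearMap.ext_basis b b fun i j ↦ b.ext fun k ↦ H i j k
  exact congr($this x y z)

theorem eq_neg_lie_of_basis (b : Module.Basis ι R L) {ε : L →ₗ[R] L →ₗ[R] M} {f : L →ₗ[R] M}
    (H : ∀ i j, ε (b i) (b j) = -f ⁅b i, b j⁆) (x y : L) : ε x y = -f ⁅x, y⁆ := by
  have : ε = -(LieModule.toEnd R L L : L →ₗ[R] Module.End R L).compr₂ f :=
    LinearMap.ext_basis b b H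
  rw [this]
  rfl

end LieAlgebra

section CocycleEquation

variable {K V : Type*} [CommRing K] [AddCommGroup V] [Module K V]

variable (K) in
def WittCocycleEquation (c : ℤ → V) : Prop :=
  ∀ n m : ℤ, ((n : K) - m) • c (n + m) + (2 * n + m : K) • c m - (n + 2 * m : K) • c n = 0

theorem wittCocycleEquation_cubic (a b : V) :
    WittCocycleEquation K fun n : ℤ ↦ (n : K) ^ 3 • a + (n : K) • b := by
  intro n m
  push_cast
  module

theorem WittCocycleEquation.sub {c d : ℤ → V} (hc : WittCocycleEquation K c)
    (hd : WittCocycleEquation K d) : WittCocycleEquation K (c - d) := by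
  intro n m
  simp only [Pi.sub_apply]
  linear_combination (norm := module) hc n m - hd n m

end CocycleEquation

section CocycleEquationSolutions

variable {K V : Type*} [Field K] [CharZero K] [AddCommGroup V] [Module K V]

theorem WittCocycleEquation.eq_zero {d : ℤ → V} (hd : WittCocycleEquation K d)
    (hodd : ∀ n, d (-n) = -d n) (h1 : d 1 = 0) (h2 : d 2 = 0) (n : ℤ) : d n = 0 := by
  have : IsAddTorsionFree V := .of_isTorsionFree K V
  have h0 : d 0 = 0 := self_eq_neg.mp (by simpa using hodd 0)
  have hstep : ∀ k : ℕ, d (k + 2) = 0 := by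
    intro k
    induction k with
    | zero => simpa using h2
    | succ k ih =>
      have hrec := hd (k + 2) 1
      rw [h1, ih, smul_zero, smul_zero, add_zero, sub_zero] at hrec
      have hk : ((k + 2 : ℤ) : K) - (1 : ℤ) = k + 1 := by push_cast; ring
      rw [hk] at hrec
      rw [Nat.cast_succ, add_right_comm]
      exact (smul_eq_zero.mp hrec).resolve_left (Nat.cast_add_one_ne_zero k)
  have hnat : ∀ k : ℕ, d k = 0
    | 0 => h0
    | 1 => h1
    | k + 2 => mod_cast hstep k
  obtain ⟨k, rfl | rfl⟩ := n.eq_nat_or_neg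
  · exact hnat k
  · rw [hodd, hnat, neg_zero]

theorem WittCocycleEquation.exists_cubic {c : ℤ → V} (hc : WittCocycleEquation K c)
    (hodd : ∀ n, c (-n) = -c n) : ∃ a b : V, ∀ n : ℤ, c n = (n : K) ^ 3 • a + (n : K) • b := by
  set a : V := (6 : K)⁻¹ • (c 2 - (2 : K) • c 1)
  have h6a : (6 : K) • a = c 2 - (2 : K) • c 1 := smul_inv_smul₀ (by norm_num) _
  refine ⟨a, c 1 - a, fun n ↦ sub_eq_zero.mp ?_⟩
  refine (hc.sub (wittCocycleEquation_cubic a (c 1 - a))).eq_zero ?_ ?_ ?_ n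
  · intro n
    simp only [Pi.sub_apply, hodd, Int.cast_neg]
    module
  · simp only [Pi.sub_apply, Int.cast_one]
    module
  · simp only [Pi.sub_apply, Int.cast_ofNat]
    linear_combination (norm := module) -h6a

theorem exists_smul_eq_iff_of_cubic {c : ℤ → V} {a b : V}
    (hab : ∀ n : ℤ, c n = (n : K) ^ 3 • a + (n : K) • b) :
    (∃ v : V, ∀ n : ℤ, c n = (n : K) • v) ↔ a = 0 := by
  refine ⟨fun ⟨v, hv⟩ ↦ ?_, fun ha ↦ ⟨b, fun n ↦ by simp [hab, ha]⟩⟩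
  have h1 := (hab 1).symm.trans (hv 1)
  have h2 := (hab 2).symm.trans (hv 2)
  simp only [Int.cast_one, Int.cast_ofNat, one_pow, one_smul] at h1 h2
  have : (6 : K) • a = 0 := by linear_combination (norm := module) h2 - (2 : K) • h1
  exact (smul_eq_zero.mp this).resolve_left (by norm_num)

end CocycleEquationSolutions

section Witt

variable {K W h : Type*} [CommRing K] [LieRing W] [LieAlgebra K W] [AddCommGroup h] [Module K h]
  {ℓ : Module.Basis ℤ K W} {c : ℤ → h} {ε : W →ₗ[K] W →ₗ[K] h}

theorem witt_apply_lie_basis (hbr : ∀ n m : ℤ, ⁅ℓ n, ℓ m⁆ = ((n - m : ℤ) : K) • ℓ (n + m))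
    (hε : ∀ n m : ℤ, ε (ℓ n) (ℓ m) = if n + m = 0 then c n else 0) (n m k : ℤ) :
    ε ⁅ℓ n, ℓ m⁆ (ℓ k) = if n + m + k = 0 then ((n : K) - m) • c (n + m) else 0 := by
  rw [hbr, map_smul, LinearMap.smul_apply, hε, Int.cast_sub, smul_ite, smul_zero]

theorem witt_cyclic_basis_iff (hbr : ∀ n m : ℤ, ⁅ℓ n, ℓ m⁆ = ((n - m : ℤ) : K) • ℓ (n + m))
    (hε : ∀ n m : ℤ, ε (ℓ n) (ℓ m) = if n + m = 0 then c n else 0) (hc : ∀ n : ℤ, c (-n) = -c n) :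
    (∀ i j k : ℤ, ε ⁅ℓ i, ℓ j⁆ (ℓ k) + ε ⁅ℓ k, ℓ i⁆ (ℓ j) + ε ⁅ℓ j, ℓ k⁆ (ℓ i) = 0) ↔
      WittCocycleEquation K c := by
  simp only [witt_apply_lie_basis hbr hε]
  constructor
  · intro H n m
    have := H n m (-n - m)
    rw [if_pos (by ring), if_pos (by ring), if_pos (by ring), show -n - m + n = -m by ring,
      show m + (-n - m) = -n by ring, hc, hc] at this
    rw [← this]
    push_cast
    module
  · intro H i j k
    by_cases hijk : i + j + k = 0
    · obtain rfl : k = -i - j := by omega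
      rw [if_pos (by ring), if_pos (by ring), if_pos (by ring), show -i - j + i = -j by ring,
        show j + (-i - j) = -i by ring, hc, hc, ← H i j]
      push_cast
      module
    · rw [if_neg hijk, if_neg (by omega), if_neg (by omega), add_zero, add_zero]

end Witt

theorem witt_coboundary_iff {K W h : Type*} [Field K] [CharZero K] [LieRing W] [LieAlgebra K W]
    [AddCommGroup h] [Module K h] {ℓ : Module.Basis ℤ K W} {c : ℤ → h} {ε : W →ₗ[K] W →ₗ[K] h}
    (hbr : ∀ n m : ℤ, ⁅ℓ n, ℓ m⁆ = ((n - m : ℤ) : K) • ℓ (n + m))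
    (hε : ∀ n m : ℤ, ε (ℓ n) (ℓ m) = if n + m = 0 then c n else 0) :
    (∃ f : W →ₗ[K] h, ∀ x y : W, ε x y = -f ⁅x, y⁆) ↔ ∃ v : h, ∀ n : ℤ, c n = (n : K) • v := by
  constructor
  · rintro ⟨f, hf⟩
    refine ⟨-(2 : K) • f (ℓ 0), fun n ↦ ?_⟩
    have := hf (ℓ n) (ℓ (-n))
    rw [hε, if_pos (add_neg_cancel n), hbr, map_smul, add_neg_cancel] at this
    rw [this]
    push_cast
    module
  · rintro ⟨v, hv⟩
    refine ⟨ℓ.constr K fun n ↦ if n = 0 then -(2 : K)⁻¹ • v else 0,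
      eq_neg_lie_of_basis ℓ fun n m ↦ ?_⟩
    rw [hε, hbr, map_smul, Module.Basis.constr_basis]
    split_ifs with hnm
    · obtain rfl : m = -n := by omega
      rw [hv]
      push_cast
      match_scalars
      field_simp
      ring
    · rw [smul_zero, neg_zero]

/-- Classification of the 2-cochains `ε(ℓ n, ℓ m) = c n · δ_{n+m,0}` on the Witt algebra:
such a cochain is a 2-cocycle iff `c n = n³·a + n·b` for some `a b : h`, and in that
case it is a coboundary iff `a = 0`. -/
theorem witt_cocycle_iff_cubic
    (K : Type*) [Field K] [CharZero K]
    (W : Type*) [LieRing W] [LieAlgebra K W]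
    (ℓ : Module.Basis ℤ K W)
    (hbr : ∀ n m : ℤ, ⁅ℓ n, ℓ m⁆ = ((n - m : ℤ) : K) • ℓ (n + m))
    (h : Type*) [AddCommGroup h] [Module K h]
    (c : ℤ → h) (hc : ∀ n : ℤ, c (-n) = - c n)
    (ε : W →ₗ[K] W →ₗ[K] h)
    (hε : ∀ n m : ℤ, ε (ℓ n) (ℓ m) = if n + m = 0 then c n else 0) :
    ((∀ x y z : W, ε ⁅x, y⁆ z + ε ⁅z, x⁆ y + ε ⁅y, z⁆ x = 0) ↔
      ∃ a b : h, ∀ n : ℤ, c n = ((n : K) ^ 3) • a + (n : K) • b) ∧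
    (∀ a b : h, (∀ n : ℤ, c n = ((n : K) ^ 3) • a + (n : K) • b) →
      ((∃ f : W →ₗ[K] h, ∀ x y : W, ε x y = - f ⁅x, y⁆) ↔ a = 0)) := by
  refine ⟨?_, fun a b hab ↦ (witt_coboundary_iff hbr hε).trans (exists_smul_eq_iff_of_cubic hab)⟩
  rw [forall_cyclic_lie_eq_zero_iff_basis ℓ, witt_cyclic_basis_iff hbr hε hc]
  refine ⟨fun H ↦ H.exists_cubic hc, ?_⟩
  rintro ⟨a, b, hab⟩
  obtain rfl : c = _ := funext hab
  exact wittCocycleEquation_cubic a b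
end

section
/- Let g be a Lie algebra over a field K, let e be a perfect Lie algebra (i.e. e = [e,e]) with a Lie algebra morphism π : e → g, and let π′ : e′ → g be a Lie algebra morphism whose kernel is contained in the centre of e′. Then there exists at most one Lie algebra morphism φ : e → e′ with π′ ∘ φ = π. -/
/-!
Since `π' ∘ φ = π' ∘ ψ`, the difference `φ - ψ` takes values in `ker π'`, hence in the centre.
Central discrepancies vanish inside brackets, so `φ ⁅x, y⁆ = ⁅φ x, φ y⁆ = ⁅ψ x, ψ y⁆ = ψ ⁅x, y⁆`;
as `e` is perfect, brackets span `e` and `φ = ψ`.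
-/

namespace LieHom

variable {R L L' : Type*} [CommRing R] [LieRing L] [LieAlgebra R L] [LieRing L'] [LieAlgebra R L']

theorem map_lie_eq_of_sub_mem_center {φ ψ : L →ₗ⁅R⁆ L'}
    (h : ∀ x, φ x - ψ x ∈ LieAlgebra.center R L') (x y : L) : φ ⁅x, y⁆ = ψ ⁅x, y⁆ := by
  have hx : ⁅φ x - ψ x, φ y⁆ = 0 := by
    rw [← lie_skew, (LieModule.mem_maxTrivSubmodule R L' L' _).1 (h x), neg_zero]
  have hy : ⁅ψ x, φ y - ψ y⁆ = 0 := (LieModule.mem_maxTrivSubmodule R L' L' _).1 (h y) _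
  calc φ ⁅x, y⁆ = ⁅φ x - ψ x, φ y⁆ + ⁅ψ x, φ y - ψ y⁆ + ⁅ψ x, ψ y⁆ := by
        rw [map_lie, add_assoc, ← lie_add, sub_add_cancel, ← add_lie, sub_add_cancel]
    _ = ψ ⁅x, y⁆ := by rw [hx, hy, zero_add, zero_add, map_lie]

theorem ext_of_span_lie_eq_top (hL : Submodule.span R {z : L | ∃ x y : L, ⁅x, y⁆ = z} = ⊤)
    {φ ψ : L →ₗ⁅R⁆ L'} (h : ∀ x y : L, φ ⁅x, y⁆ = ψ ⁅x, y⁆) : φ = ψ :=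
  have hlin : (φ : L →ₗ[R] L') = ψ := LinearMap.ext_on hL <| by
    rintro _ ⟨x, y, rfl⟩
    exact h x y
  ext fun z => LinearMap.congr_fun hlin z

end LieHom

/-- Let `e` be a perfect Lie algebra with a morphism `π : e → g`, and let
`π' : e' → g` be a morphism whose kernel is contained in the centre of `e'`.
Then there is at most one morphism `φ : e → e'` with `π' ∘ φ = π`. -/
theorem unique_morphism_over_perfect
    (K : Type*) [Field K]
    (g : Type*) [LieRing g] [LieAlgebra K g]
    (e : Type*) [LieRing e] [LieAlgebra K e]
    (e' : Type*) [LieRing e'] [LieAlgebra K e']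
    (hperfect : Submodule.span K {z : e | ∃ x y : e, ⁅x, y⁆ = z} = ⊤)
    (π : e →ₗ⁅K⁆ g) (π' : e' →ₗ⁅K⁆ g)
    (hker : ∀ x : e', π' x = 0 → ∀ y : e', ⁅x, y⁆ = 0)
    (φ ψ : e →ₗ⁅K⁆ e')
    (hφ : ∀ x : e, π' (φ x) = π x) (hψ : ∀ x : e, π' (ψ x) = π x) :
    φ = ψ := by
  have hcentral : ∀ x, φ x - ψ x ∈ LieAlgebra.center K e' := by
    intro x
    refine (LieModule.mem_maxTrivSubmodule K e' e' _).2 fun y => ?_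
    rw [← lie_skew, hker _ (by rw [map_sub, hφ, hψ, sub_self]), neg_zero]
  exact LieHom.ext_of_span_lie_eq_top hperfect (LieHom.map_lie_eq_of_sub_mem_center hcentral)
end

section
/- Let K be a field of characteristic zero and W the Witt algebra over K. Let Vir′ := W ⊕ K with the bracket [(x,a), (y,b)] := ([x,y], ε(x,y)), where ε is the alternating bilinear form on W determined by ε(ℓ_n, ℓ_m) = n³ δ_{n+m,0}. Then Vir′ is a Lie algebra, the projection p : Vir′ → W is surjective with kernel 0 ⊕ K contained in the centre of Vir′, and Vir′ is the universal central extension of W: for every Lie algebra e with a surjective Lie morphism π : e → W whose kernel is contained in the centre of e, there exists a unique Lie algebra morphism φ : Vir′ → e with π ∘ φ = p. -/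
/-!
`Vir′` is a Lie algebra because `ε` is an alternating 2-cocycle on `W`. Given a central extension
`π : e → W`, lift the `ℓ n` to `E n` on which `ad (E 0)` acts by `-n`: this is possible because
`ad (ℓ 0)` acts on `ℓ n` by `-n`, which is invertible for `n ≠ 0`. The defect
`⁅E n, E m⁆ - (n - m) • E (n + m)` is then a central-valued 2-cocycle; the cocycle identity forces
it to vanish off `n + m = 0` and to equal `n³ • a + n • b` on it. Shifting `E 0` by `b / 2` leaves
the relations of `Vir′` with `(0, 1) ↦ a`. Uniqueness holds because `Vir′` is perfect and two lifts
differ by a central-valued map, which is invisible in brackets.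
-/

open Submodule

section CentralKernel

variable {K : Type*} [CommRing K] {e L : Type*} [LieRing e] [LieAlgebra K e]
  [LieRing L] [LieAlgebra K L]

theorem lie_eq_lie_of_central_kernel (π : e →ₗ⁅K⁆ L)
    (hπc : ∀ x : e, π x = 0 → ∀ y : e, ⁅x, y⁆ = 0) {x x' y y' : e}
    (hx : π x = π x') (hy : π y = π y') : ⁅x, y⁆ = ⁅x', y'⁆ := by
  have hx0 : ⁅x - x', y⁆ = 0 := hπc _ (by rw [map_sub, hx, sub_self]) y
  have hy0 : ⁅x', y - y'⁆ = 0 := by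
    rw [← lie_skew, hπc _ (by rw [map_sub, hy, sub_self]) x', neg_zero]
  rw [sub_lie, sub_eq_zero] at hx0
  rw [lie_sub, sub_eq_zero] at hy0
  rw [hx0, hy0]

theorem LinearMap.eq_of_map_bracket_eq_lie {M : Type*} [AddCommGroup M] [Module K M]
    (br : M → M → M) (hspan : span K (Set.range (Function.uncurry br)) = ⊤)
    (π : e →ₗ⁅K⁆ L) (hπc : ∀ x : e, π x = 0 → ∀ y : e, ⁅x, y⁆ = 0) {φ ψ : M →ₗ[K] e}
    (hφ : ∀ u v, φ (br u v) = ⁅φ u, φ v⁆) (hψ : ∀ u v, ψ (br u v) = ⁅ψ u, ψ v⁆)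
    (hπ : ∀ u, π (φ u) = π (ψ u)) : φ = ψ := by
  refine LinearMap.ext_on_range hspan fun ⟨u, v⟩ => ?_
  rw [Function.uncurry_apply_pair, hφ, hψ]
  exact lie_eq_lie_of_central_kernel π hπc (hπ u) (hπ v)

end CentralKernel

/-- `z n m` stands for `ω (ℓ n) (ℓ m)` for a 2-cocycle `ω` of the Witt algebra with
`ω (ℓ 0) = 0`. -/
structure IsNormalizedWittCocycle (K : Type*) {V : Type*} [Ring K] [AddCommGroup V]
    [Module K V] (z : ℤ → ℤ → V) : Prop where
  zero_left : ∀ n, z 0 n = 0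
  swap : ∀ n m, z m n = -z n m
  cocycle : ∀ n m k, ((m - k : ℤ) : K) • z n (m + k) =
    ((n - m : ℤ) : K) • z (n + m) k + ((n - k : ℤ) : K) • z m (n + k)

namespace IsNormalizedWittCocycle

variable {K : Type*} [Field K] {V : Type*} [AddCommGroup V] [Module K V]
  {z : ℤ → ℤ → V}

theorem eq_zero_of_add_ne_zero [CharZero K] (hz : IsNormalizedWittCocycle K z) {n m : ℤ}
    (h : n + m ≠ 0) : z n m = 0 := by
  have key := hz.cocycle n m 0
  rw [add_zero, add_zero, hz.swap 0 (n + m), hz.zero_left, hz.swap n m] at key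
  have : ((n + m : ℤ) : K) • z n m = 0 := by
    push_cast at key ⊢
    linear_combination (norm := module) key
  exact (smul_eq_zero.mp this).resolve_left (Int.cast_ne_zero.mpr h)

theorem antidiagonal_succ (hz : IsNormalizedWittCocycle K z) (n : ℤ) :
    ((n + 2 : ℤ) : K) • z n (-n) =
      ((n - 1 : ℤ) : K) • z (n + 1) (-(n + 1)) + ((2 * n + 1 : ℤ) : K) • z 1 (-1) := by
  have key := hz.cocycle n 1 (-(n + 1))
  rw [show 1 + -(n + 1) = -n by ring, show n + -(n + 1) = -1 by ring] at key
  push_cast at key ⊢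
  linear_combination (norm := module) key

theorem exists_antidiagonal_eq [CharZero K] (hz : IsNormalizedWittCocycle K z) :
    ∃ a b : V, ∀ n : ℤ, z n (-n) = (n : K) ^ 3 • a + (n : K) • b := by
  -- `a`, `b` solve `z 1 (-1) = a + b`, `z 2 (-2) = 8 • a + 2 • b`; the recurrence does the rest.
  set a : V := (6 : K)⁻¹ • (z 2 (-2) - (2 : K) • z 1 (-1))
  set b : V := z 1 (-1) - a
  have h1 : z 1 (-1) = ((1 : ℤ) : K) ^ 3 • a + ((1 : ℤ) : K) • b := by
    simp only [b, Int.cast_one, one_pow, one_smul, add_sub_cancel]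
  have h2 : z 2 (-2) = ((2 : ℤ) : K) ^ 3 • a + ((2 : ℤ) : K) • b := by
    simp only [a, b]; match_scalars <;> field_simp <;> ring
  have hpos : ∀ n : ℤ, 2 ≤ n → z n (-n) = (n : K) ^ 3 • a + (n : K) • b := by
    intro n hn
    induction n, hn using Int.leInduction with
    | base => exact h2
    | succ n hn ih =>
      have hn1 : ((n - 1 : ℤ) : K) ≠ 0 := Int.cast_ne_zero.mpr (by omega)
      apply smul_right_injective V hn1
      have key := hz.antidiagonal_succ n
      rw [ih, h1] at key
      push_cast at key ⊢
      linear_combination (norm := module) -key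
  have hnonneg : ∀ n : ℤ, 0 ≤ n → z n (-n) = (n : K) ^ 3 • a + (n : K) • b := by
    intro n hn
    obtain rfl | rfl | hn2 : n = 0 ∨ n = 1 ∨ 2 ≤ n := by omega
    · simp [hz.zero_left]
    · exact h1
    · exact hpos n hn2
  refine ⟨a, b, fun n => ?_⟩
  rcases le_or_gt 0 n with hn | hn
  · exact hnonneg n hn
  · have := hnonneg (-n) (by omega)
    rw [neg_neg, hz.swap] at this
    rw [← neg_neg (z n (-n)), this]
    push_cast
    module

theorem exists_eq [CharZero K] (hz : IsNormalizedWittCocycle K z) :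
    ∃ a b : V, ∀ n m : ℤ,
      z n m = if n + m = 0 then (n : K) ^ 3 • a + (n : K) • b else 0 := by
  obtain ⟨a, b, hab⟩ := hz.exists_antidiagonal_eq
  refine ⟨a, b, fun n m => ?_⟩
  split_ifs with h
  · rw [eq_neg_of_add_eq_zero_right h, hab]
  · exact hz.eq_zero_of_add_ne_zero h

end IsNormalizedWittCocycle

section VirasoroCocycle

variable {K : Type*} [Field K] {W : Type*} [LieRing W] [LieAlgebra K W]

theorem virasoroCocycle_swap (ℓ : Module.Basis ℤ K W) (ε : W →ₗ[K] W →ₗ[K] K)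
    (hε : ∀ n m : ℤ, ε (ℓ n) (ℓ m) = if n + m = 0 then ((n : K) ^ 3) else 0) (x y : W) :
    ε x y = -ε y x := by
  suffices ε = -ε.flip from LinearMap.congr_fun₂ this x y
  refine LinearMap.ext_basis ℓ ℓ fun n m => ?_
  simp only [LinearMap.neg_apply, LinearMap.flip_apply, hε]
  by_cases h : n + m = 0
  · rw [if_pos h, if_pos (by omega), eq_neg_of_add_eq_zero_right h]
    push_cast; ring
  · rw [if_neg h, if_neg (by omega), neg_zero]

theorem virasoroCocycle_self [CharZero K] (ℓ : Module.Basis ℤ K W) (ε : W →ₗ[K] W →ₗ[K] K)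
    (hε : ∀ n m : ℤ, ε (ℓ n) (ℓ m) = if n + m = 0 then ((n : K) ^ 3) else 0) (x : W) :
    ε x x = 0 :=
  CharZero.eq_neg_self_iff.mp (virasoroCocycle_swap ℓ ε hε x x)

theorem virasoroCocycle_lie (ℓ : Module.Basis ℤ K W)
    (hbr : ∀ n m : ℤ, ⁅ℓ n, ℓ m⁆ = ((n - m : ℤ) : K) • ℓ (n + m)) (ε : W →ₗ[K] W →ₗ[K] K)
    (hε : ∀ n m : ℤ, ε (ℓ n) (ℓ m) = if n + m = 0 then ((n : K) ^ 3) else 0) (x y z : W) :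
    ε x ⁅y, z⁆ = ε ⁅x, y⁆ z + ε y ⁅x, z⁆ := by
  induction ℓ.mem_span x using span_induction generalizing y z with
  | mem x hx =>
    obtain ⟨n, rfl⟩ := hx
    induction ℓ.mem_span y using span_induction generalizing z with
    | mem y hy =>
      obtain ⟨m, rfl⟩ := hy
      induction ℓ.mem_span z using span_induction with
      | mem z hz =>
        obtain ⟨k, rfl⟩ := hz
        simp only [hbr, map_smul, LinearMap.smul_apply, hε, smul_eq_mul]
        by_cases h : n + (m + k) = 0
        · rw [if_pos h, if_pos (by omega), if_pos (by omega), show k = -n - m by omega]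
          push_cast; ring
        · rw [if_neg h, if_neg (by omega), if_neg (by omega)]; ring
      | zero => simp
      | add z z' _ _ hz hz' => simp only [lie_add, map_add, hz, hz']; ring
      | smul c z _ hz => simp only [lie_smul, map_smul, hz, smul_eq_mul]; ring
    | zero => simp
    | add y y' _ _ hy hy' =>
      simp only [add_lie, lie_add, map_add, LinearMap.add_apply, hy, hy']; ring
    | smul c y _ hy =>
      simp only [smul_lie, lie_smul, map_smul, LinearMap.smul_apply, smul_eq_mul, hy]; ring
  | zero => simp
  | add x x' _ _ hx hx' => simp only [add_lie, map_add, LinearMap.add_apply, hx, hx']; ring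
  | smul c x _ hx =>
    simp only [smul_lie, map_smul, LinearMap.smul_apply, smul_eq_mul, hx]; ring

end VirasoroCocycle

section CentralExtension

variable {K : Type*} [Field K] {W : Type*} [LieRing W] [LieAlgebra K W]
  {e : Type*} [LieRing e] [LieAlgebra K e]

theorem exists_lift_lie_lift_zero_eq_neg_smul [CharZero K] (ℓ : Module.Basis ℤ K W)
    (hbr : ∀ n m : ℤ, ⁅ℓ n, ℓ m⁆ = ((n - m : ℤ) : K) • ℓ (n + m)) (π : e →ₗ⁅K⁆ W)
    (hπ : Function.Surjective π) (hπc : ∀ x : e, π x = 0 → ∀ y : e, ⁅x, y⁆ = 0) :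
    ∃ E : ℤ → e, (∀ n, π (E n) = ℓ n) ∧ ∀ n, ⁅E 0, E n⁆ = -(n : K) • E n := by
  choose F hF using fun n => hπ (ℓ n)
  have hπF : ∀ n : ℤ, π ⁅F 0, F n⁆ = π (-(n : K) • F n) := fun n => by
    rw [LieHom.map_lie, hF, hF, hbr, map_smul, hF, zero_add]; push_cast; rw [zero_sub]
  -- `ad (F 0)` acts on `F n` by `-n` only modulo the centre, but on `⁅F 0, F n⁆` exactly.
  refine ⟨fun n => if n = 0 then F 0 else -(n : K)⁻¹ • ⁅F 0, F n⁆, fun n => ?_, fun n => ?_⟩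
  · dsimp only
    split_ifs with h
    · rw [h, hF]
    · have hn : (n : K) ≠ 0 := Int.cast_ne_zero.mpr h
      rw [map_smul, hπF, map_smul, hF, smul_smul, neg_mul_neg, inv_mul_cancel₀ hn, one_smul]
  · by_cases h : n = 0
    · subst h; simp only [if_pos, lie_self, Int.cast_zero, neg_zero, zero_smul]
    · simp only [if_pos, if_neg h, lie_smul]
      rw [lie_eq_lie_of_central_kernel π hπc rfl (hπF n), lie_smul, smul_comm]

theorem isNormalizedWittCocycle_lie_sub (ℓ : Module.Basis ℤ K W)
    (hbr : ∀ n m : ℤ, ⁅ℓ n, ℓ m⁆ = ((n - m : ℤ) : K) • ℓ (n + m)) (π : e →ₗ⁅K⁆ W)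
    (hπc : ∀ x : e, π x = 0 → ∀ y : e, ⁅x, y⁆ = 0) {E : ℤ → e} (hE : ∀ n, π (E n) = ℓ n)
    (hE0 : ∀ n, ⁅E 0, E n⁆ = -(n : K) • E n) :
    IsNormalizedWittCocycle K fun n m => ⁅E n, E m⁆ - ((n - m : ℤ) : K) • E (n + m) := by
  have hπE : ∀ n m, π ⁅E n, E m⁆ = π (((n - m : ℤ) : K) • E (n + m)) := fun n m => by
    rw [LieHom.map_lie, hE, hE, hbr, map_smul, hE]
  refine ⟨fun n => ?_, fun n m => ?_, fun n m k => ?_⟩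
  · rw [hE0, zero_add]; push_cast; module
  · rw [← lie_skew, add_comm m n]; push_cast; module
  · have jacobi := leibniz_lie (E n) (E m) (E k)
    rw [lie_eq_lie_of_central_kernel π hπc rfl (hπE m k),
      lie_eq_lie_of_central_kernel π hπc (hπE n m) rfl,
      lie_eq_lie_of_central_kernel π hπc rfl (hπE n k), lie_smul, smul_lie, lie_smul] at jacobi
    rw [show n + (m + k) = n + m + k by ring, show m + (n + k) = n + m + k by ring]
    push_cast at jacobi ⊢
    linear_combination (norm := module) jacobi

theorem exists_lift_virasoro_relations [CharZero K] (ℓ : Module.Basis ℤ K W)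
    (hbr : ∀ n m : ℤ, ⁅ℓ n, ℓ m⁆ = ((n - m : ℤ) : K) • ℓ (n + m)) (π : e →ₗ⁅K⁆ W)
    (hπ : Function.Surjective π) (hπc : ∀ x : e, π x = 0 → ∀ y : e, ⁅x, y⁆ = 0) :
    ∃ (G : ℤ → e) (a : e), π a = 0 ∧ (∀ n, π (G n) = ℓ n) ∧ ∀ n m,
      ⁅G n, G m⁆ = ((n - m : ℤ) : K) • G (n + m) + (if n + m = 0 then (n : K) ^ 3 else 0) • a := by
  obtain ⟨E, hE, hE0⟩ := exists_lift_lie_lift_zero_eq_neg_smul ℓ hbr π hπ hπc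
  obtain ⟨a, b, hab⟩ := (isNormalizedWittCocycle_lie_sub ℓ hbr π hπc hE hE0).exists_eq
  have hπab : ∀ n : ℤ, (n : K) ^ 3 • π a + (n : K) • π b = 0 := fun n => by
    have := congrArg π (hab n (-n))
    rw [if_pos (add_neg_cancel n), map_sub, LieHom.map_lie, hE, hE, hbr, map_smul, hE,
      sub_self, map_add, map_smul, map_smul] at this
    exact this.symm
  have hπa : π a = 0 := by
    have : (3 : K) • π a = 0 := by
      linear_combination (norm := module) (2⁻¹ : K) • hπab 2 - hπab 1
    simpa using this
  have hπb : π b = 0 := by simpa [hπa] using hπab 1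
  -- shifting `E 0` by `b / 2` absorbs the coboundary part `n • b` of the defect
  refine ⟨fun n => E n + if n = 0 then (2 : K)⁻¹ • b else 0, a, hπa, fun n => ?_, fun n m => ?_⟩
  · dsimp only
    split_ifs <;> simp [hE, hπb]
  · have hπG : ∀ n, π (E n + if n = 0 then (2 : K)⁻¹ • b else 0) = π (E n) := fun n => by
      split_ifs <;> simp [hπb]
    dsimp only
    rw [lie_eq_lie_of_central_kernel π hπc (hπG n) (hπG m), sub_eq_iff_eq_add.mp (hab n m)]
    by_cases h : n + m = 0
    · obtain rfl : m = -n := by omega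
      simp only [h, if_true]
      push_cast
      module
    · simp [h]

theorem exists_section_lie_eq_add_smul [CharZero K] (ℓ : Module.Basis ℤ K W)
    (hbr : ∀ n m : ℤ, ⁅ℓ n, ℓ m⁆ = ((n - m : ℤ) : K) • ℓ (n + m)) (ε : W →ₗ[K] W →ₗ[K] K)
    (hε : ∀ n m : ℤ, ε (ℓ n) (ℓ m) = if n + m = 0 then ((n : K) ^ 3) else 0)
    (π : e →ₗ⁅K⁆ W) (hπ : Function.Surjective π)
    (hπc : ∀ x : e, π x = 0 → ∀ y : e, ⁅x, y⁆ = 0) :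
    ∃ (s : W →ₗ[K] e) (a : e), π a = 0 ∧ (∀ x, π (s x) = x) ∧
      ∀ x y, ⁅s x, s y⁆ = s ⁅x, y⁆ + ε x y • a := by
  obtain ⟨G, a, hπa, hGπ, hG⟩ := exists_lift_virasoro_relations ℓ hbr π hπ hπc
  set s := ℓ.constr K G
  have hs : ∀ n, s (ℓ n) = G n := ℓ.constr_basis K G
  refine ⟨s, a, hπa, fun x => ?_, fun x y => ?_⟩
  · have : (π : e →ₗ[K] W) ∘ₗ s = LinearMap.id := ℓ.ext fun n => by simp [hs, hGπ]
    exact LinearMap.congr_fun this x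
  · have : (LieModule.toEnd K e e : e →ₗ[K] Module.End K e).compl₁₂ s s =
        (LieModule.toEnd K W W : W →ₗ[K] Module.End K W).compr₂ s +
          ε.compr₂ (LinearMap.toSpanSingleton K e a) :=
      LinearMap.ext_basis ℓ ℓ fun n m => by simp [hs, hG, hbr, hε]
    simpa using LinearMap.congr_fun₂ this x y

end CentralExtension

section VirasoroAlgebra

variable {K : Type*} [Field K] {W : Type*} [LieRing W] [LieAlgebra K W]

def virasoroBracket (ε : W →ₗ[K] W →ₗ[K] K) (u v : W × K) : W × K :=
  (⁅u.1, v.1⁆, ε u.1 v.1)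

theorem span_range_uncurry_virasoroBracket_eq_top [CharZero K] (ℓ : Module.Basis ℤ K W)
    (hbr : ∀ n m : ℤ, ⁅ℓ n, ℓ m⁆ = ((n - m : ℤ) : K) • ℓ (n + m)) (ε : W →ₗ[K] W →ₗ[K] K)
    (hε : ∀ n m : ℤ, ε (ℓ n) (ℓ m) = if n + m = 0 then ((n : K) ^ 3) else 0) :
    span K (Set.range (Function.uncurry (virasoroBracket ε))) = ⊤ := by
  set S := span K (Set.range (Function.uncurry (virasoroBracket ε)))
  have hmem : ∀ u v, virasoroBracket ε u v ∈ S := fun u v => subset_span ⟨(u, v), rfl⟩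
  have hbracket : ∀ n m : ℤ,
      ((((n - m : ℤ) : K) • ℓ (n + m), if n + m = 0 then (n : K) ^ 3 else 0) : W × K) ∈ S :=
    fun n m => by simpa [virasoroBracket, hbr, hε] using hmem (ℓ n, 0) (ℓ m, 0)
  have hcentre : ((0, 1) : W × K) ∈ S := by
    have := S.sub_mem (hbracket 2 (-2)) (S.smul_mem (2 : K) (hbracket 1 (-1)))
    convert S.smul_mem (6 : K)⁻¹ this using 1
    norm_num [Prod.ext_iff]
    module
  have hbasis : ∀ n, ((ℓ n, 0) : W × K) ∈ S := fun n => by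
    by_cases hn : n = 0
    · subst hn
      convert S.smul_mem (2 : K)⁻¹ (S.sub_mem (hbracket 1 (-1)) hcentre) using 1
      norm_num [Prod.ext_iff]
      module
    · convert S.smul_mem (n : K)⁻¹ (hbracket n 0) using 1
      simp [hn, inv_smul_smul₀ ((Int.cast_ne_zero (α := K)).mpr hn)]
  have hW : span K (Set.range ℓ) ≤ S.comap (LinearMap.inl K W K) :=
    span_le.mpr (Set.range_subset_iff.mpr hbasis)
  refine eq_top_iff'.mpr fun u => ?_
  convert S.add_mem (hW (ℓ.mem_span u.1)) (S.smul_mem u.2 hcentre) using 1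
  simp

theorem exists_linearMap_map_virasoroBracket_eq_lie [CharZero K] (ℓ : Module.Basis ℤ K W)
    (hbr : ∀ n m : ℤ, ⁅ℓ n, ℓ m⁆ = ((n - m : ℤ) : K) • ℓ (n + m)) (ε : W →ₗ[K] W →ₗ[K] K)
    (hε : ∀ n m : ℤ, ε (ℓ n) (ℓ m) = if n + m = 0 then ((n : K) ^ 3) else 0)
    {e : Type*} [LieRing e] [LieAlgebra K e] (π : e →ₗ⁅K⁆ W) (hπ : Function.Surjective π)
    (hπc : ∀ x : e, π x = 0 → ∀ y : e, ⁅x, y⁆ = 0) :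
    ∃ φ : W × K →ₗ[K] e,
      (∀ u v, φ (virasoroBracket ε u v) = ⁅φ u, φ v⁆) ∧ ∀ u, π (φ u) = u.1 := by
  obtain ⟨s, a, hπa, hs, hsε⟩ := exists_section_lie_eq_add_smul ℓ hbr ε hε π hπ hπc
  have hπφ : ∀ u : W × K, π (s u.1 + u.2 • a) = u.1 := fun u => by simp [hs, hπa]
  refine ⟨s.coprod (LinearMap.toSpanSingleton K e a), fun u v => ?_, hπφ⟩
  simp only [virasoroBracket, LinearMap.coprod_apply, LinearMap.toSpanSingleton_apply]
  rw [lie_eq_lie_of_central_kernel π hπc ((hπφ u).trans (hs u.1).symm)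
    ((hπφ v).trans (hs v.1).symm), hsε]

end VirasoroAlgebra

/-- The Virasoro-type central extension `Vir′ = W ⊕ K` of the Witt algebra `W`,
with bracket `[(x,a),(y,b)] = ([x,y], ε(x,y))` for the 2-cocycle
`ε(ℓ n, ℓ m) = n³ δ_{n+m,0}`, is a Lie algebra, the projection onto `W` is a
central extension, and it is the universal central extension of `W`. -/
theorem virasoro_prime_universal_central_extension
    (K : Type*) [Field K] [CharZero K]
    (W : Type*) [LieRing W] [LieAlgebra K W]
    (ℓ : Module.Basis ℤ K W)
    (hbr : ∀ n m : ℤ, ⁅ℓ n, ℓ m⁆ = ((n - m : ℤ) : K) • ℓ (n + m))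
    (ε : W →ₗ[K] W →ₗ[K] K)
    (hε : ∀ n m : ℤ, ε (ℓ n) (ℓ m) = if n + m = 0 then ((n : K) ^ 3) else 0)
    (br : W × K → W × K → W × K)
    (hbrdef : ∀ u v : W × K, br u v = (⁅u.1, v.1⁆, ε u.1 v.1)) :
    -- `Vir′` is a Lie algebra:
    ((∀ u v w : W × K, br (u + v) w = br u w + br v w) ∧
     (∀ u v w : W × K, br u (v + w) = br u v + br u w) ∧
     (∀ (c : K) (u v : W × K), br (c • u) v = c • br u v) ∧
     (∀ (c : K) (u v : W × K), br u (c • v) = c • br u v) ∧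
     (∀ u : W × K, br u u = 0) ∧
     (∀ u v w : W × K, br u (br v w) = br (br u v) w + br v (br u w))) ∧
    -- the projection is surjective and its kernel `0 ⊕ K` is central:
    (Function.Surjective (Prod.fst : W × K → W) ∧
     (∀ u : W × K, u.1 = 0 → ∀ v : W × K, br u v = 0)) ∧
    -- universal property:
    (∀ (e : Type*) [LieRing e] [LieAlgebra K e] (π : e →ₗ⁅K⁆ W),
      Function.Surjective π →
      (∀ x : e, π x = 0 → ∀ y : e, ⁅x, y⁆ = 0) →
      ∃! φ : W × K →ₗ[K] e,
        (∀ u v : W × K, φ (br u v) = ⁅φ u, φ v⁆) ∧ (∀ u : W × K, π (φ u) = u.1)) := by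
  obtain rfl : br = virasoroBracket ε := funext fun u => funext (hbrdef u)
  refine ⟨⟨fun u v w => ?_, fun u v w => ?_, fun c u v => ?_, fun c u v => ?_, fun u => ?_,
    fun u v w => ?_⟩, ⟨fun x => ⟨(x, 0), rfl⟩, fun u hu v => ?_⟩, fun e _ _ π hπ hπc => ?_⟩
  · simp [virasoroBracket, add_lie]
  · simp [virasoroBracket, lie_add]
  · simp [virasoroBracket, smul_lie]
  · simp [virasoroBracket, lie_smul]
  · simp [virasoroBracket, virasoroCocycle_self ℓ ε hε]
  · exact Prod.ext (leibniz_lie _ _ _) (virasoroCocycle_lie ℓ hbr ε hε _ _ _)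
  · simp [virasoroBracket, hu]
  · obtain ⟨φ, hφ, hπφ⟩ := exists_linearMap_map_virasoroBracket_eq_lie ℓ hbr ε hε π hπ hπc
    refine ⟨φ, ⟨hφ, hπφ⟩, fun ψ ⟨hψ, hπψ⟩ => ?_⟩
    exact LinearMap.eq_of_map_bracket_eq_lie _
      (span_range_uncurry_virasoroBracket_eq_top ℓ hbr ε hε) π hπc
      hψ hφ fun u => by rw [hπψ, hπφ]
end

section
/- Let K be a field of characteristic zero and g a Lie algebra over K equipped with an invariant symmetric bilinear form ( , ). On the loop Lie algebra g̃ = K[x,x⁻¹] ⊗_K g, define the bilinear form ε(f ⊗ a, g ⊗ b) := res(f′·g)·(a, b), where f′ is the formal derivative of f and res picks the coefficient of x⁻¹; equivalently, ε(a_n, b_m) = n·(a,b)·δ_{n+m,0} on the elements a_n := xⁿ ⊗ a. Then ε is alternating (ε(u,u) = 0) and satisfies the Chevalley–Eilenberg 2-cocycle condition ε([u,v],w) + ε([w,u],v) + ε([v,w],u) = 0 for all u, v, w ∈ g̃. -/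
open scoped TensorProduct

/-!
Both identities are multilinear in their arguments, so it suffices to check them on the
spanning family `xⁿ ⊗ a` of the loop algebra. There skew-symmetry is `n·δ_{n+m,0} = -m·δ_{m+n,0}`,
which gives alternation in characteristic zero. For the cocycle identity, invariance and
symmetry of `( , )` make `([a,b],c)` cyclically invariant, so the three terms add up to
`((n+m) + (p+n) + (m+p))·([a,b],c)·δ_{n+m+p,0} = 0`.
-/

open LaurentPolynomial Submodule

theorem LaurentPolynomial.span_range_T (R : Type*) [Semiring R] :
    span R (Set.range (T : ℤ → R[T;T⁻¹])) = ⊤ := by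
  refine eq_top_iff'.2 fun p => p.induction_on' (fun _ _ => add_mem) fun n a => ?_
  rw [← smul_eq_C_mul]
  exact smul_mem _ _ (subset_span ⟨n, rfl⟩)

theorem LaurentPolynomial.span_T_tmul_eq_top (R M : Type*) [CommSemiring R] [AddCommMonoid M]
    [Module R M] :
    span R (Set.image2 (· ⊗ₜ[R] ·) (Set.range (T : ℤ → R[T;T⁻¹])) (Set.univ : Set M)) = ⊤ := by
  have h := map₂_span_span R (TensorProduct.mk R R[T;T⁻¹] M) (Set.range T) Set.univ
  rw [span_range_T, span_univ, TensorProduct.map₂_mk_top_top_eq_top] at h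
  exact h.symm

theorem LinearMap.eq_neg_flip_of_span_eq_top {R M N : Type*} [CommSemiring R] [AddCommMonoid M]
    [Module R M] [AddCommGroup N] [Module R N] {ε : M →ₗ[R] M →ₗ[R] N} {S : Set M}
    (hS : span R S = ⊤) (h : ∀ x ∈ S, ∀ y ∈ S, ε x y = -ε y x) : ε = -ε.flip :=
  ext_on hS fun x hx => ext_on hS fun y hy => h x hx y hy

theorem LinearMap.apply_lie_apply_cycle {R L : Type*} [CommRing R] [LieRing L] [LieAlgebra R L]
    {B : L →ₗ[R] L →ₗ[R] R} (hsymm : ∀ a b, B a b = B b a)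
    (hinv : ∀ a b c, B ⁅a, b⁆ c = B a ⁅b, c⁆) (a b c : L) : B ⁅a, b⁆ c = B ⁅b, c⁆ a := by
  rw [hinv, hsymm]

section CyclicBracketSum

variable {R L N : Type*} [CommRing R] [LieRing L] [LieAlgebra R L] [AddCommGroup N] [Module R N]

def cyclicBracketSum (ε : L →ₗ[R] L →ₗ[R] N) (v w : L) : L →ₗ[R] N where
  toFun u := ε ⁅u, v⁆ w + ε ⁅w, u⁆ v + ε ⁅v, w⁆ u
  map_add' x y := by
    simp only [add_lie, lie_add, map_add, LinearMap.add_apply]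
    abel
  map_smul' r x := by
    simp only [smul_lie, lie_smul, map_smul, LinearMap.smul_apply, RingHom.id_apply, smul_add]

variable (ε : L →ₗ[R] L →ₗ[R] N)

theorem cyclicBracketSum_apply (u v w : L) :
    cyclicBracketSum ε v w u = ε ⁅u, v⁆ w + ε ⁅w, u⁆ v + ε ⁅v, w⁆ u :=
  rfl

theorem cyclicBracketSum_cycle (u v w : L) :
    cyclicBracketSum ε v w u = cyclicBracketSum ε w u v := by
  simp only [cyclicBracketSum_apply]
  abel

theorem cyclicBracketSum_eq_zero_of_span_eq_top {S : Set L} (hS : span R S = ⊤)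
    (h : ∀ u ∈ S, ∀ v ∈ S, ∀ w ∈ S, cyclicBracketSum ε v w u = 0) (u v w : L) :
    cyclicBracketSum ε v w u = 0 := by
  have vanish (f : L →ₗ[R] N) (hf : ∀ x ∈ S, f x = 0) (x : L) : f x = 0 :=
    LinearMap.congr_fun (LinearMap.ext_on (g := 0) hS hf) x
  -- Extend one variable at a time, cycling the arguments so that it is always the linear one.
  have h₁ (u : L) (v) (hv : v ∈ S) (w) (hw : w ∈ S) : cyclicBracketSum ε v w u = 0 :=
    vanish _ (fun u hu => h u hu v hv w hw) u
  have h₂ (u v : L) (w) (hw : w ∈ S) : cyclicBracketSum ε v w u = 0 := by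
    rw [cyclicBracketSum_cycle]
    exact vanish _ (fun v hv => (cyclicBracketSum_cycle ε u v w).symm.trans (h₁ u v hv w hw)) v
  rw [cyclicBracketSum_cycle, cyclicBracketSum_cycle]
  exact vanish _ (fun w hw => (cyclicBracketSum_cycle ε w u v).trans (h₂ u v w hw)) w

end CyclicBracketSum

section LoopAlgebra

variable {K g : Type*} [Field K] [LieRing g] [LieAlgebra K g] {B : g →ₗ[K] g →ₗ[K] K}
  {ε : (K[T;T⁻¹] ⊗[K] g) →ₗ[K] (K[T;T⁻¹] ⊗[K] g) →ₗ[K] K}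

theorem loopForm_T_tmul_skew (hsymm : ∀ a b : g, B a b = B b a)
    (hε : ∀ (n m : ℤ) (a b : g),
      ε (T n ⊗ₜ[K] a) (T m ⊗ₜ[K] b) = if n + m = 0 then (n : K) * B a b else 0)
    (n m : ℤ) (a b : g) : ε (T n ⊗ₜ a) (T m ⊗ₜ b) = -ε (T m ⊗ₜ b) (T n ⊗ₜ a) := by
  rw [hε, hε, hsymm b a]
  by_cases h : n + m = 0
  · rw [if_pos h, if_pos (by omega), show m = -n by omega, Int.cast_neg]
    ring
  · rw [if_neg h, if_neg (by omega), neg_zero]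

theorem loopForm_T_tmul_cocycle (hsymm : ∀ a b : g, B a b = B b a)
    (hinv : ∀ a b c : g, B ⁅a, b⁆ c = B a ⁅b, c⁆)
    (hε : ∀ (n m : ℤ) (a b : g),
      ε (T n ⊗ₜ[K] a) (T m ⊗ₜ[K] b) = if n + m = 0 then (n : K) * B a b else 0)
    (n m p : ℤ) (a b c : g) :
    cyclicBracketSum ε (T m ⊗ₜ b) (T p ⊗ₜ c) (T n ⊗ₜ a) = 0 := by
  have hcyc := LinearMap.apply_lie_apply_cycle hsymm hinv
  simp only [cyclicBracketSum_apply, LieAlgebra.ExtendScalars.bracket_tmul, ← T_add, hε,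
    ← hcyc b c a, ← hcyc a b c]
  by_cases h : n + m + p = 0
  · rw [if_pos h, if_pos (by omega), if_pos (by omega)]
    have h' : ((n + m + p : ℤ) : K) = 0 := by rw [h, Int.cast_zero]
    push_cast at h' ⊢
    linear_combination 2 * B ⁅a, b⁆ c * h'
  · rw [if_neg h, if_neg (by omega), if_neg (by omega)]
    simp

end LoopAlgebra

/-- On the loop Lie algebra `g̃ = K[x,x⁻¹] ⊗ g` of a Lie algebra `g` with an invariant
symmetric bilinear form `B`, the bilinear form determined by
`ε(xⁿ ⊗ a, xᵐ ⊗ b) = n·B(a,b)·δ_{n+m,0}` is alternating and satisfies the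
Chevalley–Eilenberg 2-cocycle condition. -/
theorem loop_algebra_two_cocycle
    (K : Type*) [Field K] [CharZero K]
    (g : Type*) [LieRing g] [LieAlgebra K g]
    (B : g →ₗ[K] g →ₗ[K] K)
    (hsymm : ∀ a b : g, B a b = B b a)
    (hinv : ∀ a b c : g, B ⁅a, b⁆ c = B a ⁅b, c⁆)
    (ε : (LaurentPolynomial K ⊗[K] g) →ₗ[K] (LaurentPolynomial K ⊗[K] g) →ₗ[K] K)
    (hε : ∀ (n m : ℤ) (a b : g),
      ε (LaurentPolynomial.T n ⊗ₜ[K] a) (LaurentPolynomial.T m ⊗ₜ[K] b) =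
        if n + m = 0 then (n : K) * B a b else 0) :
    (∀ u : LaurentPolynomial K ⊗[K] g, ε u u = 0) ∧
    (∀ u v w : LaurentPolynomial K ⊗[K] g,
      ε ⁅u, v⁆ w + ε ⁅w, u⁆ v + ε ⁅v, w⁆ u = 0) := by
  have hspan := span_T_tmul_eq_top K g
  refine ⟨LinearMap.isAlt_iff_eq_neg_flip.2 ?_, fun u v w => ?_⟩
  · refine LinearMap.eq_neg_flip_of_span_eq_top hspan ?_
    rintro _ ⟨_, ⟨n, rfl⟩, a, -, rfl⟩ _ ⟨_, ⟨m, rfl⟩, b, -, rfl⟩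
    exact loopForm_T_tmul_skew hsymm hε n m a b
  · refine cyclicBracketSum_eq_zero_of_span_eq_top ε hspan ?_ u v w
    rintro _ ⟨_, ⟨n, rfl⟩, a, -, rfl⟩ _ ⟨_, ⟨m, rfl⟩, b, -, rfl⟩ _ ⟨_, ⟨p, rfl⟩, c, -, rfl⟩
    exact loopForm_T_tmul_cocycle hsymm hinv hε n m p a b c
end

section
/- Let K be a field of characteristic zero and E a K-vector space. A two-variable distribution c : ℤ × ℤ → E is local if and only if it is the distribution kernel of a differential operator: there exist n ∈ ℕ and distributions c⁰, …, c^{n−1} : ℤ → E such that c_{t,s} = Σ_{i=0}^{n−1} (t choose i) cⁱ_{t+s−i} for all t, s ∈ ℤ. In particular, for a Lie algebra g over K, two distributions a, b : ℤ → g are local if and only if they satisfy the weak commutator formula: there exist n ∈ ℕ and c⁰, …, c^{n−1} : ℤ → g with [a_t, b_s] = Σ_{i=0}^{n−1} (t choose i) cⁱ_{t+s−i} for all t, s ∈ ℤ. -/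
/-- The binomial polynomial `(t choose i) = t(t−1)⋯(t−i+1)/i!`, as an element of `K`. -/
noncomputable def binomPoly (K : Type*) [Field K] (t : ℤ) (i : ℕ) : K :=
  (∏ k ∈ Finset.range i, ((t : K) - (k : K))) / (Nat.factorial i : K)

/-- A two-variable distribution `c` is local of order `≤ n` if
`Σ_{k=0}^{n} (−1)^k (n choose k) c_{t+n−k, s+k} = 0` for all `t, s`
(the coefficient form of `(z−w)ⁿ c(z,w) = 0`). -/
def IsLocalOfOrder {E : Type*} [AddCommGroup E] (c : ℤ → ℤ → E) (n : ℕ) : Prop :=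
  ∀ t s : ℤ, ∑ k ∈ Finset.range (n + 1),
    ((-1 : ℤ) ^ k * (n.choose k : ℤ)) • c (t + (n : ℤ) - (k : ℤ)) (s + (k : ℤ)) = 0

/-!
In coefficients, multiplication by `z - w` acts on each antidiagonal restriction
`u ↦ c u (m - u)` as the forward difference `Δ`, so locality of order `n` says exactly that `Δⁿ`
kills all these restrictions. In characteristic zero the functions `ℤ → E` killed by `Δⁿ` are
exactly the combinations `∑_{i<n} (t choose i) • vᵢ`, by Newton's forward difference expansion and
Pascal's rule `Δ (t choose i+1) = (t choose i)`. Taking `vᵢ = d i (m - i)` turns this into the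
kernel formula.
-/

open Finset fwdDiff

section Locality

variable {E : Type*} [AddCommGroup E]

theorem eq_of_fwdDiff_eq {F G : ℤ → E} (h : Δ_[1] F = Δ_[1] G) (h0 : F 0 = G 0) : F = G := by
  have hper : Function.Periodic (F - G) 1 := fun t ↦ by
    simpa [fwdDiff, sub_eq_sub_iff_sub_eq_sub] using congrFun h t
  funext t
  simpa [h0, sub_eq_zero] using hper.int_mul_eq t

theorem fwdDiff_iter_antidiagonal_eq_sum (c : ℤ → ℤ → E) (n : ℕ) (t s : ℤ) :
    Δ_[1] ^[n] (fun u ↦ c u (t + s + n - u)) t =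
      ∑ k ∈ range (n + 1), ((-1 : ℤ) ^ k * (n.choose k : ℤ)) • c (t + n - k) (s + k) := by
  rw [fwdDiff_iter_eq_sum_shift, ← sum_range_reflect]
  refine sum_congr rfl fun k hk ↦ ?_
  have hkn : k ≤ n := Nat.lt_succ_iff.1 (mem_range.1 hk)
  simp only [Nat.add_sub_cancel, Nat.sub_sub_self hkn, Nat.choose_symm hkn, nsmul_eq_mul,
    mul_one, Nat.cast_sub hkn]
  congr 2 <;> ring

theorem isLocalOfOrder_iff_fwdDiff_iter_eq_zero {c : ℤ → ℤ → E} {n : ℕ} :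
    IsLocalOfOrder c n ↔ ∀ m : ℤ, Δ_[1] ^[n] (fun u ↦ c u (m - u)) = 0 := by
  constructor
  · intro hc m
    funext t
    have h := fwdDiff_iter_antidiagonal_eq_sum c n t (m - t - n)
    rw [show t + (m - t - n) + n = m by ring] at h
    rw [h, hc]
    rfl
  · intro hc t s
    rw [← fwdDiff_iter_antidiagonal_eq_sum, hc]
    rfl

end Locality

section BinomPoly

variable {K : Type*} [Field K]

theorem binomPoly_zero_right (t : ℤ) : binomPoly K t 0 = 1 := by
  simp [binomPoly]

theorem binomPoly_zero_succ (i : ℕ) : binomPoly K 0 (i + 1) = 0 := by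
  simp [binomPoly, prod_range_succ']

theorem binomPoly_eq_choose [CharZero K] (t : ℤ) (i : ℕ) :
    binomPoly K t i = Ring.choose (t : K) i := by
  rw [Ring.choose_eq_smul, ← Polynomial.aeval_eq_smeval, ← Polynomial.eval_map_algebraMap,
    descPochhammer_map, descPochhammer_eval_eq_prod_range, smul_eq_mul, binomPoly,
    div_eq_inv_mul]

theorem binomPoly_succ_succ [CharZero K] (t : ℤ) (i : ℕ) :
    binomPoly K (t + 1) (i + 1) = binomPoly K t i + binomPoly K t (i + 1) := by
  simp only [binomPoly_eq_choose, Int.cast_add, Int.cast_one, Ring.choose_succ_succ]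

end BinomPoly

section NewtonExpansion

variable {K E : Type*} [Field K] [CharZero K] [AddCommGroup E] [Module K E]

theorem fwdDiff_sum_binomPoly_smul (v : ℕ → E) (n : ℕ) :
    Δ_[1] (fun t ↦ ∑ i ∈ range (n + 1), binomPoly K t i • v i) =
      fun t ↦ ∑ i ∈ range n, binomPoly K t i • v (i + 1) := by
  funext t
  simp only [fwdDiff, sum_range_succ' _ n, binomPoly_zero_right, add_sub_add_right_eq_sub,
    ← sum_sub_distrib, ← sub_smul, binomPoly_succ_succ, add_sub_cancel_right]

theorem fwdDiff_iter_sum_binomPoly_smul (v : ℕ → E) (n : ℕ) :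
    Δ_[1] ^[n] (fun t ↦ ∑ i ∈ range n, binomPoly K t i • v i) = 0 := by
  induction n generalizing v with
  | zero => rfl
  | succ n ih =>
    rw [Function.iterate_succ_apply, fwdDiff_sum_binomPoly_smul]
    exact ih _

theorem eq_sum_binomPoly_smul_of_fwdDiff_iter_eq_zero {F : ℤ → E} {n : ℕ}
    (hF : Δ_[1] ^[n] F = 0) :
    F = fun t ↦ ∑ i ∈ range n, binomPoly K t i • Δ_[1] ^[i] F 0 := by
  induction n generalizing F with
  | zero => exact hF
  | succ n ih =>
    refine eq_of_fwdDiff_eq ?_ ?_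
    · rw [fwdDiff_sum_binomPoly_smul, ih hF]
      simp only [Function.iterate_succ_apply]
    · simp [sum_range_succ', binomPoly_zero_succ, binomPoly_zero_right]

variable (K) in
theorem exists_isLocalOfOrder_iff_exists_kernel (c : ℤ → ℤ → E) :
    (∃ n : ℕ, IsLocalOfOrder c n) ↔
      ∃ (n : ℕ) (d : ℕ → ℤ → E), ∀ t s : ℤ,
        c t s = ∑ i ∈ range n, binomPoly K t i • d i (t + s - i) := by
  constructor
  · rintro ⟨n, hc⟩
    refine ⟨n, fun i m ↦ Δ_[1] ^[i] (fun u ↦ c u (m + i - u)) 0, fun t s ↦ ?_⟩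
    have hF := isLocalOfOrder_iff_fwdDiff_iter_eq_zero.1 hc (t + s)
    simpa only [sub_add_cancel, add_sub_cancel_left] using
      congrFun (eq_sum_binomPoly_smul_of_fwdDiff_iter_eq_zero (K := K) hF) t
  · rintro ⟨n, d, hd⟩
    refine ⟨n, isLocalOfOrder_iff_fwdDiff_iter_eq_zero.2 fun m ↦ ?_⟩
    have hF : (fun u ↦ c u (m - u)) = fun u ↦ ∑ i ∈ range n, binomPoly K u i • d i (m - i) := by
      funext u
      rw [hd, add_sub_cancel]
    rw [hF]
    exact fwdDiff_iter_sum_binomPoly_smul _ n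

end NewtonExpansion

/-- A two-variable distribution is local iff it is the distribution kernel of a
differential operator; in particular, a pair of Lie-algebra-valued distributions is
local iff it satisfies the weak commutator formula. -/
theorem local_iff_weak_commutator_formula
    (K : Type*) [Field K] [CharZero K]
    (E : Type*) [AddCommGroup E] [Module K E]
    (c : ℤ → ℤ → E)
    (g : Type*) [LieRing g] [LieAlgebra K g]
    (a b : ℤ → g) :
    ((∃ n : ℕ, IsLocalOfOrder c n) ↔
      ∃ (n : ℕ) (d : ℕ → ℤ → E), ∀ t s : ℤ,
        c t s = ∑ i ∈ Finset.range n, binomPoly K t i • d i (t + s - (i : ℤ))) ∧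
    ((∃ n : ℕ, IsLocalOfOrder (fun t s => ⁅a t, b s⁆) n) ↔
      ∃ (n : ℕ) (d : ℕ → ℤ → g), ∀ t s : ℤ,
        ⁅a t, b s⁆ = ∑ i ∈ Finset.range n, binomPoly K t i • d i (t + s - (i : ℤ))) :=
  ⟨exists_isLocalOfOrder_iff_exists_kernel K c,
    exists_isLocalOfOrder_iff_exists_kernel K fun t s ↦ ⁅a t, b s⁆⟩
end

section
/- Let K be a field of characteristic zero, g a Lie algebra over K, and a, b : ℤ → g distributions satisfying the weak commutator formula [a_t, b_s] = Σ_{i=0}^{n} (t choose i) cⁱ_{t+s−i} for all t, s ∈ ℤ, for some distributions c⁰, …, cⁿ : ℤ → g. Then each cⁱ is recovered as cⁱ_s = Σ_{k=0}^{i} (−1)^k (i choose k) [a_{i−k}, b_{s+k}] for all s ∈ ℤ; that is, cⁱ(w) = res_z (z−w)ⁱ [a(z), b(w)]. -/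
/-!
At `t = m ∈ ℕ` the binomial polynomial is the binomial coefficient, so for fixed `i` and `s`
the weak commutator formula reads `[a_m, b_{i+s−m}] = Σ_j (m choose j) cʲ_{i+s−j}`.
Since `Δ^i (m ↦ (m choose j))` vanishes at `0` unless `j = i`, the `i`-th forward difference at `0`
of the left side is `cⁱ_s`; expanding `Δ^i` as an alternating sum of shifts gives the formula.
-/

open Finset
open scoped fwdDiff

theorem binomPoly_natCast (K : Type*) [Field K] [CharZero K] (m j : ℕ) :
    binomPoly K m j = m.choose j := by
  rw [binomPoly, Int.cast_natCast, ← descPochhammer_eval_eq_prod_range,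
    descPochhammer_eval_eq_descFactorial, Nat.descFactorial_eq_factorial_mul_choose,
    Nat.cast_mul, mul_div_cancel_left₀ _ (Nat.cast_ne_zero.mpr j.factorial_ne_zero)]

theorem fwdDiff_iter_smul_const {M G R : Type*} [AddCommMonoid M] [AddCommGroup G] [Ring R]
    [Module R G] (h : M) (f : M → R) (g : G) (n : ℕ) :
    (Δ_[h])^[n] (fun y ↦ f y • g) = fun y ↦ (Δ_[h])^[n] f y • g := by
  induction n with
  | zero => rfl
  | succ n ih =>
    simp only [Function.iterate_succ_apply', ih, fwdDiff_smul_const]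
    rfl

theorem fwdDiff_iter_sum_choose_smul {G : Type*} [AddCommGroup G] (d : ℕ → G)
    {n i : ℕ} (hi : i ≤ n) :
    (Δ_[1])^[i] (fun m ↦ ∑ j ∈ range (n + 1), (m.choose j : ℤ) • d j) 0 = d i := by
  simp only [← Finset.sum_fn, fwdDiff_iter_finsetSum, Finset.sum_apply, fwdDiff_iter_smul_const,
    fwdDiff_iter_choose_zero, ite_smul, one_smul, zero_smul]
  simp [Nat.lt_succ_of_le hi]

theorem sum_alternating_choose_smul_eq_of_eq_sum_choose_smul {G : Type*} [AddCommGroup G]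
    {F d : ℕ → G} {n : ℕ} (hF : ∀ m, F m = ∑ j ∈ range (n + 1), (m.choose j : ℤ) • d j)
    {i : ℕ} (hi : i ≤ n) :
    ∑ k ∈ range (i + 1), ((-1 : ℤ) ^ k * i.choose k) • F (i - k) = d i := by
  rw [← fwdDiff_iter_sum_choose_smul d hi, fwdDiff_iter_eq_sum_shift, ← sum_range_reflect]
  refine sum_congr rfl fun k hk ↦ ?_
  have hk : k ≤ i := Nat.lt_succ_iff.mp (mem_range.mp hk)
  rw [Nat.add_sub_cancel, Nat.sub_sub_self hk, Nat.choose_symm hk, hF, zero_add, smul_eq_mul,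
    mul_one]

/-- If distributions `a, b` with values in a Lie algebra `g` satisfy the weak commutator
formula `[a_t, b_s] = Σ_{i=0}^{n} (t choose i) cⁱ_{t+s−i}`, then each coefficient
distribution is recovered as `cⁱ(w) = res_z (z−w)ⁱ [a(z), b(w)]`, i.e.
`cⁱ_s = Σ_{k=0}^{i} (−1)^k (i choose k) [a_{i−k}, b_{s+k}]`. -/
theorem weak_commutator_coefficients_recovered
    (K : Type*) [Field K] [CharZero K]
    (g : Type*) [LieRing g] [LieAlgebra K g]
    (a b : ℤ → g) (n : ℕ) (c : ℕ → ℤ → g)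
    (h : ∀ t s : ℤ,
      ⁅a t, b s⁆ = ∑ i ∈ Finset.range (n + 1), binomPoly K t i • c i (t + s - (i : ℤ))) :
    ∀ i : ℕ, i ≤ n → ∀ s : ℤ,
      c i s = ∑ k ∈ Finset.range (i + 1),
        ((-1 : ℤ) ^ k * (i.choose k : ℤ)) • ⁅a ((i : ℤ) - (k : ℤ)), b (s + (k : ℤ))⁆ := by
  intro i hi s
  have hF : ∀ m : ℕ, ⁅a m, b (i + s - m)⁆ =
      ∑ j ∈ range (n + 1), (m.choose j : ℤ) • c j (i + s - j) := by
    intro m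
    rw [h]
    refine sum_congr rfl fun j _ ↦ ?_
    rw [binomPoly_natCast, Nat.cast_smul_eq_nsmul, natCast_zsmul, add_sub_cancel]
  have hinv := sum_alternating_choose_smul_eq_of_eq_sum_choose_smul hF hi
  rw [add_sub_cancel_left] at hinv
  rw [← hinv]
  refine sum_congr rfl fun k hk ↦ ?_
  rw [Nat.cast_sub (Nat.lt_succ_iff.mp (mem_range.mp hk)),
    show (i : ℤ) + s - (i - k) = s + k by ring]
end

section
/- Let K be a field of characteristic zero, E a K-vector space, n ∈ ℕ, and c⁰, …, cⁿ : ℤ → E distributions. Then the two-variable distribution c defined by c_{t,s} := Σ_{i=0}^{n} (t choose i) cⁱ_{t+s−i} is local of order ≤ n+1: Σ_{k=0}^{n+1} (−1)^k (n+1 choose k) c_{t+n+1−k, s+k} = 0 for all t, s ∈ ℤ. (The distribution kernel of a differential operator of order n is local of order n+1.) -/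
/-!
The kernel has the form `c_{t,s} = Σᵢ Pᵢ(t) • eᵢ(t + s)` with polynomials `Pᵢ(t) = (t choose i)` of
degree `≤ n`. Along the diagonal `(t + n + 1 - k, s + k)` the second argument of `eᵢ` is constant,
so locality reduces to the vanishing of the `(n+1)`-st finite difference of a polynomial of
degree `≤ n`.
-/

open Finset Polynomial
open scoped Nat

theorem Polynomial.sum_range_neg_one_pow_mul_choose_smul_eval_sub_eq_zero {R : Type*} [CommRing R]
    {P : R[X]} {n : ℕ} (hP : P.natDegree < n) (x : R) :
    ∑ k ∈ range (n + 1), ((-1 : ℤ) ^ k * n.choose k) • P.eval (x + n - k) = 0 := by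
  -- Newton's forward-difference formula for the reflected polynomial `P (x + n - X)`.
  set Q := P.comp (C (x + n) - X)
  have hQ : Q.natDegree < n := by
    refine lt_of_le_of_lt ?_ hP
    calc Q.natDegree ≤ P.natDegree * (C (x + n) - X).natDegree := natDegree_comp_le
      _ ≤ P.natDegree * 1 := by
        gcongr
        exact natDegree_sub_le_of_le ((natDegree_C _).trans_le zero_le_one) natDegree_X_le
      _ = P.natDegree := mul_one _
  have h := fwdDiff_iter_eq_sum_shift 1 Q.eval n 0
  rw [Q.fwdDiff_iter_eq_zero_of_degree_lt hQ] at h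
  have := congrArg (((-1 : ℤ) ^ n) • ·) h
  simp only [Pi.zero_apply, smul_zero, smul_sum, smul_smul] at this
  rw [this]
  refine sum_congr rfl fun k hk => ?_
  have hk : k ≤ n := Nat.lt_succ_iff.mp (mem_range.mp hk)
  have hsign : (-1 : ℤ) ^ n * (-1) ^ (n - k) = (-1) ^ k := by
    rw [← pow_add, show n + (n - k) = k + 2 * (n - k) by omega, pow_add, pow_mul]; simp
  simp [Q, ← mul_assoc, hsign]

theorem isLocalOfOrder_of_eq_sum_eval_smul {R E ι : Type*} [CommRing R] [AddCommGroup E]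
    [Module R E] {n : ℕ} (s : Finset ι) (P : ι → R[X]) (hP : ∀ i ∈ s, (P i).natDegree < n)
    (e : ι → ℤ → E) (c : ℤ → ℤ → E)
    (hc : ∀ t u, c t u = ∑ i ∈ s, (P i).eval (t : R) • e i (t + u)) :
    IsLocalOfOrder c n := by
  intro t u
  simp_rw [hc, smul_sum]
  rw [sum_comm]
  refine sum_eq_zero fun i hi => ?_
  have hshift : ∀ k : ℕ, t + n - k + (u + k) = t + u + n := fun k => by ring
  simp_rw [hshift, ← smul_assoc, ← sum_smul]
  push_cast
  rw [(P i).sum_range_neg_one_pow_mul_choose_smul_eval_sub_eq_zero (hP i hi), zero_smul]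

theorem binomPoly_eq_eval (K : Type*) [Field K] (t : ℤ) (i : ℕ) :
    binomPoly K t i = (C (i ! : K)⁻¹ * descPochhammer K i).eval (t : K) := by
  rw [binomPoly, eval_mul, eval_C, descPochhammer_eval_eq_prod_range, div_eq_inv_mul]

theorem natDegree_C_mul_descPochhammer_lt {K : Type*} [Field K] (a : K) {i n : ℕ} (h : i < n) :
    (C a * descPochhammer K i).natDegree < n :=
  natDegree_C_mul_le a _ |>.trans_lt <| (descPochhammer_natDegree K i).symm ▸ h

theorem diffop_kernel_is_local_general
    (K : Type*) [Field K]
    (E : Type*) [AddCommGroup E] [Module K E]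
    (n : ℕ) (d : ℕ → ℤ → E) (c : ℤ → ℤ → E)
    (hc : ∀ t s : ℤ,
      c t s = ∑ i ∈ Finset.range (n + 1), binomPoly K t i • d i (t + s - (i : ℤ))) :
    IsLocalOfOrder c (n + 1) :=
  isLocalOfOrder_of_eq_sum_eval_smul (range (n + 1)) (fun i => C (i ! : K)⁻¹ * descPochhammer K i)
    (fun i hi => natDegree_C_mul_descPochhammer_lt _ (mem_range.mp hi))
    (fun i u => d i (u - i)) c fun t s => by simp_rw [hc, binomPoly_eq_eval]

/-- The distribution kernel of a differential operator of order `n`,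
`c_{t,s} = Σ_{i=0}^{n} (t choose i) cⁱ_{t+s−i}`, is local of order `≤ n+1`. -/
theorem diffop_kernel_is_local
    (K : Type*) [Field K] [CharZero K]
    (E : Type*) [AddCommGroup E] [Module K E]
    (n : ℕ) (d : ℕ → ℤ → E) (c : ℤ → ℤ → E)
    (hc : ∀ t s : ℤ,
      c t s = ∑ i ∈ Finset.range (n + 1), binomPoly K t i • d i (t + s - (i : ℤ))) :
    IsLocalOfOrder c (n + 1) :=
  diffop_kernel_is_local_general K E n d c hc
end

section
/- Let K be a field of characteristic zero, E a K-vector space, and c : ℤ × ℤ → E a two-variable distribution that is local (local of order ≤ n for some n). Suppose there exists N ∈ ℤ such that c_{t,s} = 0 for all t > N and all s ∈ ℤ (i.e. c(z,w) lies in E⟦w^{±1}⟧((z)), the z-exponents of c are bounded below). Then c = 0. -/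
/-!
Locality at `(t, s - n)` expresses `± c_{t,s}` (the term `k = n`, with coefficient `(-1)^n`)
through the coefficients `c_{t+n-k, s-n+k}` with `k < n`, whose first index exceeds `t`.
So if the coefficients vanish above some row `t`, they vanish on row `t` too, and by downward
induction everywhere.
-/

namespace IsLocalOfOrder

variable {E : Type*} [AddCommGroup E] {c : ℤ → ℤ → E} {n : ℕ}

theorem apply_eq_zero_of_forall_gt (hc : IsLocalOfOrder c n) {t : ℤ}
    (habove : ∀ t', t < t' → ∀ s, c t' s = 0) (s : ℤ) : c t s = 0 := by
  have hlocal := hc t (s - n)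
  rw [Finset.sum_range_succ, Finset.sum_eq_zero, zero_add] at hlocal
  · rw [Nat.choose_self, Nat.cast_one, mul_one, (isUnit_neg_one.pow n).smul_eq_zero] at hlocal
    simpa using hlocal
  · intro k hk
    rw [habove _ (by have := Finset.mem_range.mp hk; omega), smul_zero]

theorem forall_eq_zero_of_forall_gt (hc : IsLocalOfOrder c n) {N : ℤ}
    (hN : ∀ t, N < t → ∀ s, c t s = 0) (t s : ℤ) : c t s = 0 := by
  have hdown : ∀ M ≤ N + 1, ∀ t, M ≤ t → ∀ s, c t s = 0 := by
    refine Int.leInductionDown (fun t ht => hN t (by omega)) fun M _ ih t ht => ?_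
    rcases (show M - 1 = t ∨ M ≤ t by omega) with rfl | hMt
    · exact hc.apply_eq_zero_of_forall_gt fun t' ht' => ih t' (by omega)
    · exact ih t hMt
  rcases le_or_gt t (N + 1) with ht | ht
  · exact hdown t ht t le_rfl s
  · exact hN t (by omega) s

end IsLocalOfOrder

theorem local_laurent_series_is_zero_general
    (E : Type*) [AddCommGroup E]
    (c : ℤ → ℤ → E)
    (hloc : ∃ n : ℕ, IsLocalOfOrder c n)
    (N : ℤ) (hN : ∀ t : ℤ, N < t → ∀ s : ℤ, c t s = 0) :
    ∀ t s : ℤ, c t s = 0 :=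
  hloc.elim fun _ hc => hc.forall_eq_zero_of_forall_gt hN

/-- A local two-variable distribution whose `z`-exponents are bounded below
(i.e. `c_{t,s} = 0` for all `t > N`) is zero. -/
theorem local_laurent_series_is_zero
    (K : Type*) [Field K] [CharZero K]
    (E : Type*) [AddCommGroup E] [Module K E]
    (c : ℤ → ℤ → E)
    (hloc : ∃ n : ℕ, IsLocalOfOrder c n)
    (N : ℤ) (hN : ∀ t : ℤ, N < t → ∀ s : ℤ, c t s = 0) :
    ∀ t s : ℤ, c t s = 0 :=
  local_laurent_series_is_zero_general E c hloc N hN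
end

section
/- (Dong's Lemma.) Let K be a field of characteristic zero, g a Lie algebra over K, and a, b, c : ℤ → g distributions such that each of the pairs (a,b), (a,c), (b,c) is local of order ≤ n. Then for every i ∈ ℕ the pair (a_i b, c) is local of order ≤ 3n, where a_i b is the i-th product of distributions, (a_i b)_u := Σ_{k=0}^{i} (−1)^k (i choose k) [a_{i−k}, b_{u+k}]. -/
/-!
Encode `[[a(z), b(w)], c(x)]` as the function `F (p, q, r) = ⁅⁅a p, b q⁆, c r⁆` on `ℤ³`.
Multiplication by `z - w`, `z - x`, `w - x` becomes a difference `X - Y`, `X - Z`, `Y - Z` of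
commuting coordinate shifts. Locality of `(a, b)` gives `(X - Y)ⁿ F = 0`; by the Jacobi identity
`F` splits into a part killed by `(Y - Z)ⁿ` (locality of `(b, c)`) and one killed by `(X - Z)ⁿ`
(locality of `(a, c)`), so `(X - Z)ⁿ (Y - Z)ⁿ F = 0`. Expanding `(Y - Z)²ⁿ = ((X - Z) - (X - Y))²ⁿ`
binomially, every term carries `(X - Z)^{≥n}` or `(X - Y)^{≥n}`, hence `(Y - Z)³ⁿ F = 0`: for every
`p` the pair `(⁅a p, b ·⁆, c)` is local of order `≤ 3n`. The `i`-th product `a_i b` is an integer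
combination of shifts of such distributions.
-/

/-- A pair of `g`-valued distributions `a, b` is local of order `≤ n` if
`Σ_{k=0}^{n} (−1)^k (n choose k) ⁅a_{t+n−k}, b_{s+k}⁆ = 0` for all `t, s`
(the coefficient form of `(z−w)ⁿ [a(z), b(w)] = 0`). -/
def PairLocalOfOrder {g : Type*} [LieRing g] (a b : ℤ → g) (n : ℕ) : Prop :=
  ∀ t s : ℤ, ∑ k ∈ Finset.range (n + 1),
    ((-1 : ℤ) ^ k * (n.choose k : ℤ)) • ⁅a (t + (n : ℤ) - (k : ℤ)), b (s + (k : ℤ))⁆ = 0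

/-- The `i`-th product `a_i b` of two `g`-valued distributions:
`(a_i b)_u = Σ_{k=0}^{i} (−1)^k (i choose k) ⁅a_{i−k}, b_{u+k}⁆`. -/
def distProd {g : Type*} [LieRing g] (a b : ℤ → g) (i : ℕ) : ℤ → g :=
  fun u => ∑ k ∈ Finset.range (i + 1),
    ((-1 : ℤ) ^ k * (i.choose k : ℤ)) • ⁅a ((i : ℤ) - (k : ℤ)), b (u + (k : ℤ))⁆

open Finset fwdDiff_aux

theorem Commute.sub_pow_eq_sum {R : Type*} [Ring R] {x y : R} (h : Commute x y) (n : ℕ) :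
    (x - y) ^ n = ∑ k ∈ range (n + 1), ((-1 : ℤ) ^ k * n.choose k) • (y ^ k * x ^ (n - k)) := by
  rw [sub_eq_neg_add, h.symm.neg_left.add_pow]
  refine sum_congr rfl fun k _ => ?_
  rw [neg_pow, zsmul_eq_mul, Int.cast_mul, Int.cast_pow, Int.cast_neg, Int.cast_one,
    Int.cast_natCast, mul_assoc, mul_assoc, mul_assoc, Nat.cast_comm, mul_assoc]

theorem Commute.pow_three_mul_smul_eq_zero {R M : Type*} [Ring R] [AddCommGroup M] [Module R M]
    {A B : R} (hAB : Commute A B) {n : ℕ} {x : M} (h₁ : (A - B) ^ n • x = 0)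
    (h₂ : (A ^ n * B ^ n) • x = 0) : B ^ (3 * n) • x = 0 := by
  have hD : Commute A (A - B) := (Commute.refl A).sub_right hAB
  have hterm : ∀ k ∈ range (2 * n + 1), ((A - B) ^ k * A ^ (2 * n - k) * B ^ n) • x = 0 := by
    intro k hk
    rcases le_or_gt n k with hnk | hkn
    · obtain ⟨j, rfl⟩ := Nat.exists_eq_add_of_le hnk
      have hc : Commute ((A - B) ^ n) ((A - B) ^ j * (A ^ (2 * n - (n + j)) * B ^ n)) :=
        ((Commute.refl _).pow_pow _ _).mul_right
          ((hD.symm.pow_pow _ _).mul_right ((hAB.sub_left (Commute.refl B)).pow_pow _ _))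
      rw [pow_add]
      simp only [mul_assoc]
      rw [hc.eq, mul_smul, h₁, smul_zero]
    · rw [show 2 * n - k = n - k + n by omega, pow_add]
      simp only [mul_assoc]
      rw [mul_smul, mul_smul, h₂, smul_zero, smul_zero]
  have hB : B ^ (2 * n) = ∑ k ∈ range (2 * n + 1),
      ((-1 : ℤ) ^ k * (2 * n).choose k) • ((A - B) ^ k * A ^ (2 * n - k)) := by
    rw [← hD.sub_pow_eq_sum, sub_sub_cancel]
  rw [show 3 * n = 2 * n + n by ring, pow_add, hB, sum_mul, sum_smul]
  exact sum_eq_zero fun k hk => by rw [smul_mul_assoc, smul_assoc, hterm k hk, smul_zero]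

/-- The `(0, 0)` coefficient of `(z - w)ⁿ φ(z, w)`, in the indexing of `PairLocalOfOrder`. -/
def localitySum {G : Type*} [AddCommGroup G] (n : ℕ) (φ : ℤ → ℤ → G) : G :=
  ∑ k ∈ range (n + 1), ((-1 : ℤ) ^ k * n.choose k) • φ (n - k) k

theorem commute_shiftₗ {Γ G : Type*} [AddCommMonoid Γ] [AddCommGroup G] (v w : Γ) :
    Commute (shiftₗ Γ G v) (shiftₗ Γ G w) :=
  LinearMap.ext fun f => funext fun p => by
    simp only [Module.End.mul_apply, shiftₗ_apply, add_right_comm]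

theorem commute_shiftₗ_sub_shiftₗ {Γ G : Type*} [AddCommMonoid Γ] [AddCommGroup G]
    (u v w w' : Γ) :
    Commute (shiftₗ Γ G u - shiftₗ Γ G w) (shiftₗ Γ G v - shiftₗ Γ G w') :=
  ((commute_shiftₗ _ _).sub_right (commute_shiftₗ _ _)).sub_left
    ((commute_shiftₗ _ _).sub_right (commute_shiftₗ _ _))

theorem shiftₗ_sub_shiftₗ_pow_apply {Γ G : Type*} [AddCommGroup Γ] [AddCommGroup G] (v w : Γ)
    (n : ℕ) (f : Γ → G) (p : Γ) :
    ((shiftₗ Γ G v - shiftₗ Γ G w) ^ n) f p = localitySum n fun x y => f (p + x • v + y • w) := by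
  rw [(commute_shiftₗ v w).sub_pow_eq_sum, LinearMap.sum_apply, Finset.sum_apply]
  refine sum_congr rfl fun k hk => ?_
  beta_reduce
  rw [LinearMap.smul_apply, Pi.smul_apply, Module.End.mul_apply, shiftₗ_pow_apply,
    shiftₗ_pow_apply, ← Nat.cast_sub (mem_range_succ_iff.mp hk), natCast_zsmul, natCast_zsmul,
    add_right_comm]

section Lie

variable {g : Type*} [LieRing g] {a b c : ℤ → g} {n : ℕ}

theorem localitySum_lie_right (φ : ℤ → ℤ → g) (m : g) :
    localitySum n (fun x y => ⁅φ x y, m⁆) = ⁅localitySum n φ, m⁆ := by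
  simp only [localitySum, sum_lie, zsmul_lie]

theorem localitySum_lie_left (φ : ℤ → ℤ → g) (m : g) :
    localitySum n (fun x y => ⁅m, φ x y⁆) = ⁅m, localitySum n φ⁆ := by
  simp only [localitySum, lie_sum, lie_zsmul]

theorem pairLocalOfOrder_iff :
    PairLocalOfOrder a b n ↔ ∀ t s, localitySum n (fun x y => ⁅a (t + x), b (s + y)⁆) = 0 := by
  simp only [PairLocalOfOrder, localitySum, add_sub_assoc]

theorem PairLocalOfOrder.comp_add_right (h : PairLocalOfOrder a c n) (k : ℤ) :
    PairLocalOfOrder (fun u => a (u + k)) c n := by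
  intro t s
  simpa only [sub_add_eq_add_sub, add_right_comm _ k] using h (t + k) s

theorem PairLocalOfOrder.finsetSum_zsmul {ι : Type*} (s : Finset ι) (m : ι → ℤ) {a : ι → ℤ → g}
    (h : ∀ i ∈ s, PairLocalOfOrder (a i) c n) :
    PairLocalOfOrder (fun u => ∑ i ∈ s, m i • a i u) c n := by
  intro t r
  simp only [sum_lie, zsmul_lie, smul_sum]
  rw [sum_comm]
  refine sum_eq_zero fun i hi => ?_
  simp only [smul_comm _ (m i)]
  rw [← smul_sum, h i hi t r, smul_zero]

theorem shiftₗ_sub_pow_smul_lie_lie_eq_zero (hab : PairLocalOfOrder a b n) :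
    (shiftₗ (ℤ × ℤ × ℤ) g (1, 0, 0) - shiftₗ _ g (0, 1, 0)) ^ n •
      (fun x : ℤ × ℤ × ℤ => ⁅⁅a x.1, b x.2.1⁆, c x.2.2⁆) = 0 := by
  ext ⟨t, s, r⟩
  rw [Module.End.smul_def, shiftₗ_sub_shiftₗ_pow_apply]
  simp only [Prod.smul_mk, Prod.mk_add_mk, smul_eq_mul, mul_one, mul_zero, add_zero, Pi.zero_apply]
  rw [localitySum_lie_right, pairLocalOfOrder_iff.mp hab, zero_lie]

theorem shiftₗ_sub_pow_mul_pow_smul_lie_lie_eq_zero (hac : PairLocalOfOrder a c n)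
    (hbc : PairLocalOfOrder b c n) :
    ((shiftₗ (ℤ × ℤ × ℤ) g (1, 0, 0) - shiftₗ _ g (0, 0, 1)) ^ n *
      (shiftₗ (ℤ × ℤ × ℤ) g (0, 1, 0) - shiftₗ _ g (0, 0, 1)) ^ n) •
      (fun x : ℤ × ℤ × ℤ => ⁅⁅a x.1, b x.2.1⁆, c x.2.2⁆) = 0 := by
  have hjacobi : (fun x : ℤ × ℤ × ℤ => ⁅⁅a x.1, b x.2.1⁆, c x.2.2⁆) =
      (fun x => ⁅a x.1, ⁅b x.2.1, c x.2.2⁆⁆) + fun x => ⁅⁅a x.1, c x.2.2⁆, b x.2.1⁆ :=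
    funext fun x => by simp only [Pi.add_apply, lie_lie, ← lie_skew (b x.2.1), sub_neg_eq_add]
  have hbc' : (shiftₗ (ℤ × ℤ × ℤ) g (0, 1, 0) - shiftₗ _ g (0, 0, 1)) ^ n •
      (fun x : ℤ × ℤ × ℤ => ⁅a x.1, ⁅b x.2.1, c x.2.2⁆⁆) = 0 := by
    ext ⟨t, s, r⟩
    rw [Module.End.smul_def, shiftₗ_sub_shiftₗ_pow_apply]
    simp only [Prod.smul_mk, Prod.mk_add_mk, smul_eq_mul, mul_one, mul_zero, add_zero,
      Pi.zero_apply]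
    rw [localitySum_lie_left, pairLocalOfOrder_iff.mp hbc, lie_zero]
  have hac' : (shiftₗ (ℤ × ℤ × ℤ) g (1, 0, 0) - shiftₗ _ g (0, 0, 1)) ^ n •
      (fun x : ℤ × ℤ × ℤ => ⁅⁅a x.1, c x.2.2⁆, b x.2.1⁆) = 0 := by
    ext ⟨t, s, r⟩
    rw [Module.End.smul_def, shiftₗ_sub_shiftₗ_pow_apply]
    simp only [Prod.smul_mk, Prod.mk_add_mk, smul_eq_mul, mul_one, mul_zero, add_zero,
      Pi.zero_apply]
    rw [localitySum_lie_right, pairLocalOfOrder_iff.mp hac, zero_lie]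
  rw [hjacobi, smul_add, mul_smul, hbc', smul_zero, zero_add,
    ((commute_shiftₗ_sub_shiftₗ _ _ _ _).pow_pow n n).eq, mul_smul, hac', smul_zero]

theorem pairLocalOfOrder_lie_three_mul (hab : PairLocalOfOrder a b n)
    (hac : PairLocalOfOrder a c n) (hbc : PairLocalOfOrder b c n) (p : ℤ) :
    PairLocalOfOrder (fun q => ⁅a p, b q⁆) c (3 * n) := by
  have hab' := shiftₗ_sub_pow_smul_lie_lie_eq_zero (c := c) hab
  rw [← sub_sub_sub_cancel_right _ _ (shiftₗ _ g (0, 0, 1))] at hab'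
  have h3n := (commute_shiftₗ_sub_shiftₗ _ _ _ _).pow_three_mul_smul_eq_zero hab'
    (shiftₗ_sub_pow_mul_pow_smul_lie_lie_eq_zero hac hbc)
  refine pairLocalOfOrder_iff.mpr fun q r => ?_
  have := congr_fun h3n (p, q, r)
  rw [Module.End.smul_def, shiftₗ_sub_shiftₗ_pow_apply] at this
  simpa only [Prod.smul_mk, Prod.mk_add_mk, smul_eq_mul, mul_one, mul_zero, add_zero,
    Pi.zero_apply] using this

end Lie

theorem dongs_lemma_general
    (g : Type*) [LieRing g]
    (a b c : ℤ → g) (n : ℕ)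
    (hab : PairLocalOfOrder a b n)
    (hac : PairLocalOfOrder a c n)
    (hbc : PairLocalOfOrder b c n)
    (i : ℕ) :
    PairLocalOfOrder (distProd a b i) c (3 * n) :=
  PairLocalOfOrder.finsetSum_zsmul _ _ fun k _ =>
    (pairLocalOfOrder_lie_three_mul hab hac hbc _).comp_add_right k

/-- **Dong's Lemma.** If the pairs `(a,b)`, `(a,c)`, `(b,c)` of `g`-valued distributions
are local of order `≤ n`, then `(a_i b, c)` is local of order `≤ 3n` for every `i`. -/
theorem dongs_lemma
    (K : Type*) [Field K] [CharZero K]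
    (g : Type*) [LieRing g] [LieAlgebra K g]
    (a b c : ℤ → g) (n : ℕ)
    (hab : PairLocalOfOrder a b n)
    (hac : PairLocalOfOrder a c n)
    (hbc : PairLocalOfOrder b c n)
    (i : ℕ) :
    PairLocalOfOrder (distProd a b i) c (3 * n) :=
  dongs_lemma_general g a b c n hab hac hbc i
end

section
/- Let R be a vertex Lie algebra over a field K of characteristic zero (in coefficient form). Define [a,b]_lie := Σ_{i≥0} (−1)^i T^{i+1}(a_i b)/(i+1)! (a finite sum by weak locality). Then [ , ]_lie is a Lie bracket on R: it is bilinear, skew-symmetric ([a,b]_lie = −[b,a]_lie), and satisfies the Jacobi identity; moreover T is a derivation of [ , ]_lie, i.e. T[a,b]_lie = [Ta, b]_lie + [a, Tb]_lie. -/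
/-- A vertex Lie algebra over a field `K` of characteristic zero, in coefficient form:
a `K`-vector space `R` with an operator `T` and bilinear `t`-th products `p t`
(`t ∈ ℕ`) satisfying weak locality, the translation axioms, the conformal Jacobi
identity and conformal skew-symmetry. -/
structure VertexLieAlgebra (K : Type*) [Field K]
    (R : Type*) [AddCommGroup R] [Module K R] where
  T : R →ₗ[K] R
  p : ℕ → R →ₗ[K] R →ₗ[K] R
  weak_local : ∀ a b : R, ∃ N : ℕ, ∀ t : ℕ, N ≤ t → p t a b = 0
  trans_zero : ∀ a b : R, p 0 (T a) b = 0
  trans_succ : ∀ (t : ℕ) (a b : R), p (t + 1) (T a) b = -(((t + 1 : ℕ) : K)) • p t a b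
  trans_T : ∀ (t : ℕ) (a b : R), T (p t a b) = p t (T a) b + p t a (T b)
  jacobi : ∀ (t s : ℕ) (a b c : R),
    p t a (p s b c) - p s b (p t a c) =
      ∑ i ∈ Finset.range (t + 1), (t.choose i : K) • p (t + s - i) (p i a b) c
  skew : ∀ (a b : R) (N : ℕ), (∀ m : ℕ, N ≤ m → p m b a = 0) →
    ∀ r : ℕ, p r a b =
      ∑ i ∈ Finset.range N,
        (((-1 : K) ^ (r + 1 + i)) * ((Nat.factorial i : K)⁻¹)) • (T ^ i) (p (r + i) b a)

/-- The bracket `[a,b]_lie := Σ_{i≥0} (−1)^i T^{i+1}(a_i b)/(i+1)!` of a vertex Lie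
algebra (a finite sum by weak locality, expressed as a `finsum`). -/
noncomputable def VertexLieAlgebra.lieBr {K : Type*} [Field K]
    {R : Type*} [AddCommGroup R] [Module K R]
    (V : VertexLieAlgebra K R) (a b : R) : R :=
  ∑ᶠ i : ℕ, (((-1 : K) ^ i) * ((Nat.factorial (i + 1) : K)⁻¹)) • (V.T ^ (i + 1)) (V.p i a b)

/-!
Write `[a, b]_c := ∑ₜ cₜ • T^(t+1) (a_t b)` for an arbitrary coefficient sequence `c`, so that
`lieBr` is the case `cₜ = (-1)^t / (t+1)!`. Every `[ , ]_c` is bilinear, and `T` is a derivation of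
it by the axiom `T (a_t b) = (T a)_t b + a_t (T b)`. The translation axiom gives
`[T a, b]_c = -T [a, b]_{c'}` and hence `[a, T b]_c = T [a, b]_{c + c'}`, where `c'` is the
derivative of the generating series `∑ cₜ λ^t`. Iterating, `[T^k a, b]` and `[a, T^k b]` are `T^k`
applied to brackets with explicit coefficients, which turns `[[a, b], c]` into a double sum over the
`(a_i b)_m c` and `[a, [b, c]]` into one over the `a_t (b_s c)`. The conformal Jacobi identity
together with the hockey-stick identity `∑_{t=i}^{n} C(t, i) = C(n+1, i+1)` matches
`[a, [b, c]] - [b, [a, c]]` with `[[a, b], c]`. Skew-symmetry is conformal skew-symmetry combined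
with `∑_{r+i=n} (-1)^i / ((r+1)! i!) = (-1)^n / (n+1)!`.
-/

open Finset Filter
open scoped Nat

namespace Finset

variable {M : Type*} [AddCommMonoid M]

theorem sum_range_sum_range_eq_sum_antidiagonal {L : ℕ} {g : ℕ → ℕ → M}
    (hg : ∀ u s, L ≤ u + s → g u s = 0) :
    ∑ u ∈ range L, ∑ s ∈ range L, g u s = ∑ n ∈ range L, ∑ p ∈ antidiagonal n, g p.1 p.2 := by
  simp only [Nat.sum_antidiagonal_eq_sum_range_succ g, sum_range_diag_flip]
  refine sum_congr rfl fun u _ => (sum_subset (range_subset_range.2 (Nat.sub_le L u)) ?_).symm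
  intro s _ hs
  exact hg u s (by rw [mem_range] at hs; omega)

theorem sum_antidiagonal_sum_range_choose_nsmul (n : ℕ) (y : ℕ → M) :
    ∑ p ∈ antidiagonal n, ∑ i ∈ range (p.1 + 1), p.1.choose i • y i
      = ∑ i ∈ range (n + 1), (n + 1).choose (i + 1) • y i := by
  rw [Nat.sum_antidiagonal_eq_sum_range_succ_mk]
  simp only [range_eq_Ico, ← sum_Ico_Ico_comm, ← sum_smul]
  refine sum_congr rfl fun i _ => ?_
  rw [Nat.succ_eq_add_one, Ico_add_one_right_eq_Icc, Nat.sum_Icc_choose]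

end Finset

theorem Filter.eventually_forall_eq_zero {M : Type*} [Zero M] {f : ℕ → ℕ → M}
    (hf : ∀ i, ∀ᶠ t in atTop, f i t = 0) (hf' : ∀ᶠ i in atTop, ∀ t, f i t = 0) :
    ∀ᶠ t in atTop, ∀ i, f i t = 0 := by
  obtain ⟨N, hN⟩ := eventually_atTop.1 hf'
  filter_upwards [(eventually_all_finset (range N)).2 fun i _ => hf i] with t ht i
  by_cases hi : i < N
  · exact ht i (mem_range.2 hi)
  · exact hN i (not_lt.1 hi) t

namespace VertexLieAlgebra

def lieCoeff {K : Type*} [Field K] (n : ℕ) : K := (-1) ^ n * ((n + 1)! : K)⁻¹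

/-- The derivative of the generating series `∑ cₜ λ^t`. -/
def derivCoeff {K : Type*} [Field K] (c : ℕ → K) (t : ℕ) : K := ((t + 1 : ℕ) : K) * c (t + 1)

section Bracket

variable {K : Type*} [Field K] {R : Type*} [AddCommGroup R] [Module K R]
  (V : VertexLieAlgebra K R)

theorem eventually_p_eq_zero (a b : R) : ∀ᶠ t in atTop, V.p t a b = 0 :=
  eventually_atTop.2 (V.weak_local a b)

theorem eventually_forall_p_p_left (a b c : R) :
    ∀ᶠ t in atTop, ∀ i, V.p t (V.p i a b) c = 0 :=
  eventually_forall_eq_zero (fun i => V.eventually_p_eq_zero _ c)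
    ((V.eventually_p_eq_zero a b).mono fun i hi t => by rw [hi, map_zero, LinearMap.zero_apply])

theorem eventually_forall_p_p_right (a b c : R) :
    ∀ᶠ t in atTop, ∀ i, V.p t a (V.p i b c) = 0 :=
  eventually_forall_eq_zero (fun i => V.eventually_p_eq_zero a _)
    ((V.eventually_p_eq_zero b c).mono fun i hi t => by rw [hi, map_zero])

noncomputable def bracketWith (c : ℕ → K) (a b : R) : R :=
  ∑ᶠ t : ℕ, c t • (V.T ^ (t + 1)) (V.p t a b)

theorem lieBr_eq_bracketWith : V.lieBr = V.bracketWith lieCoeff := rfl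

theorem hasFiniteSupport_bracketWith_summand (c : ℕ → K) (a b : R) :
    (fun t => c t • (V.T ^ (t + 1)) (V.p t a b)).HasFiniteSupport := by
  obtain ⟨N, hN⟩ := V.weak_local a b
  refine (Set.finite_Iio N).subset fun t ht => ?_
  by_contra h
  exact ht (by simp only [hN t (not_lt.1 h), map_zero, smul_zero])

variable {V} in
theorem bracketWith_eq_sum (c : ℕ → K) {a b : R} {N : ℕ}
    (hN : ∀ t, N ≤ t → V.p t a b = 0) :
    V.bracketWith c a b = ∑ t ∈ range N, c t • (V.T ^ (t + 1)) (V.p t a b) := by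
  refine finsum_eq_finsetSum_of_support_subset _ fun t ht => ?_
  by_contra h
  exact ht (by simp only [hN t (by simpa using h), map_zero, smul_zero])

variable {V} in
theorem smul_T_pow_bracketWith (x : K) (j : ℕ) (c : ℕ → K) {a b : R} {N : ℕ}
    (hN : ∀ t, N ≤ t → V.p t a b = 0) :
    x • (V.T ^ j) (V.bracketWith c a b)
      = ∑ t ∈ range N, (x * c t) • (V.T ^ (j + t + 1)) (V.p t a b) := by
  rw [bracketWith_eq_sum c hN, map_sum, smul_sum]
  refine sum_congr rfl fun t _ => ?_
  rw [map_smul, smul_smul, ← Module.End.mul_apply, ← pow_add, add_assoc]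

theorem bracketWith_add_left (c : ℕ → K) (a a' b : R) :
    V.bracketWith c (a + a') b = V.bracketWith c a b + V.bracketWith c a' b := by
  simp only [bracketWith, map_add, LinearMap.add_apply, smul_add]
  exact finsum_add_distrib (V.hasFiniteSupport_bracketWith_summand c a b)
    (V.hasFiniteSupport_bracketWith_summand c a' b)

theorem bracketWith_add_right (c : ℕ → K) (a b b' : R) :
    V.bracketWith c a (b + b') = V.bracketWith c a b + V.bracketWith c a b' := by
  simp only [bracketWith, map_add, smul_add]
  exact finsum_add_distrib (V.hasFiniteSupport_bracketWith_summand c a b)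
    (V.hasFiniteSupport_bracketWith_summand c a b')

theorem bracketWith_smul_left (c : ℕ → K) (k : K) (a b : R) :
    V.bracketWith c (k • a) b = k • V.bracketWith c a b := by
  simp only [bracketWith, map_smul, LinearMap.smul_apply, smul_comm (c _) k, smul_finsum]

theorem bracketWith_smul_right (c : ℕ → K) (k : K) (a b : R) :
    V.bracketWith c a (k • b) = k • V.bracketWith c a b := by
  simp only [bracketWith, map_smul, smul_comm (c _) k, smul_finsum]

theorem bracketWith_neg_left (c : ℕ → K) (a b : R) :
    V.bracketWith c (-a) b = -V.bracketWith c a b := by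
  rw [← neg_one_smul K a, bracketWith_smul_left, neg_one_smul]

theorem bracketWith_add_coeff (c c' : ℕ → K) (a b : R) :
    V.bracketWith (c + c') a b = V.bracketWith c a b + V.bracketWith c' a b := by
  simp only [bracketWith, Pi.add_apply, add_smul]
  exact finsum_add_distrib (V.hasFiniteSupport_bracketWith_summand c a b)
    (V.hasFiniteSupport_bracketWith_summand c' a b)

theorem bracketWith_neg_coeff (c : ℕ → K) (a b : R) :
    V.bracketWith (-c) a b = -V.bracketWith c a b := by
  simp only [bracketWith, Pi.neg_apply, neg_smul, finsum_neg_distrib]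

noncomputable def bracketWithBilin (c : ℕ → K) : R →ₗ[K] R →ₗ[K] R :=
  LinearMap.mk₂ K (V.bracketWith c) (V.bracketWith_add_left c) (V.bracketWith_smul_left c)
    (V.bracketWith_add_right c) (V.bracketWith_smul_right c)

theorem bracketWith_sum_smul_left {ι : Type*} (c : ℕ → K) (s : Finset ι) (x : ι → K)
    (v : ι → R) (b : R) :
    V.bracketWith c (∑ i ∈ s, x i • v i) b = ∑ i ∈ s, x i • V.bracketWith c (v i) b := by
  show V.bracketWithBilin c _ b = ∑ i ∈ s, x i • V.bracketWithBilin c (v i) b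
  simp only [map_sum, map_smul, LinearMap.sum_apply, LinearMap.smul_apply]

theorem bracketWith_sum_smul_right {ι : Type*} (c : ℕ → K) (s : Finset ι) (x : ι → K)
    (a : R) (v : ι → R) :
    V.bracketWith c a (∑ i ∈ s, x i • v i) = ∑ i ∈ s, x i • V.bracketWith c a (v i) := by
  show V.bracketWithBilin c a _ = ∑ i ∈ s, x i • V.bracketWithBilin c a (v i)
  simp only [map_sum, map_smul]

theorem T_bracketWith (c : ℕ → K) (a b : R) :
    V.T (V.bracketWith c a b) = V.bracketWith c (V.T a) b + V.bracketWith c a (V.T b) := by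
  rw [bracketWith, bracketWith, bracketWith, ← LinearMap.toAddMonoidHom_coe,
    AddMonoidHom.map_finsum _ (V.hasFiniteSupport_bracketWith_summand c a b),
    ← finsum_add_distrib (V.hasFiniteSupport_bracketWith_summand c _ b)
      (V.hasFiniteSupport_bracketWith_summand c a _)]
  refine finsum_congr fun t => ?_
  rw [LinearMap.toAddMonoidHom_coe, map_smul, ← Module.End.mul_apply, ← pow_succ', pow_succ,
    Module.End.mul_apply, V.trans_T, map_add, smul_add]

theorem bracketWith_T_left (c : ℕ → K) (a b : R) :
    V.bracketWith c (V.T a) b = -V.T (V.bracketWith (derivCoeff c) a b) := by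
  obtain ⟨N, hN⟩ := V.weak_local a b
  have hTN : ∀ t, N + 1 ≤ t → V.p t (V.T a) b = 0 := by
    rintro (_ | t) ht
    · omega
    · rw [V.trans_succ, hN t (by omega), smul_zero]
  rw [bracketWith_eq_sum c hTN, bracketWith_eq_sum _ hN, sum_range_succ', V.trans_zero,
    map_zero, smul_zero, add_zero, map_sum, ← sum_neg_distrib]
  refine sum_congr rfl fun t _ => ?_
  rw [V.trans_succ, derivCoeff, map_smul, map_smul, ← Module.End.mul_apply V.T, ← pow_succ',
    smul_smul, ← neg_smul]
  congr 1
  ring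

theorem bracketWith_T_right (c : ℕ → K) (a b : R) :
    V.bracketWith c a (V.T b) = V.T (V.bracketWith (c + derivCoeff c) a b) := by
  rw [V.bracketWith_add_coeff, map_add, V.T_bracketWith, V.bracketWith_T_left]
  abel

end Bracket

section Coefficients

variable {K : Type*} [Field K]

/-! `lieCoeffTPowLeft k` and `lieCoeffTPowRight k` are the coefficient sequences of
`lieBr (T^k a) b` and `lieBr a (T^k b)` (`lieBr_T_pow_left`, `lieBr_T_pow_right`);
`lieCoeffNested (t + s)` is the coefficient of `T^(t+s+2) (a_t (b_s c))` in
`lieBr a (lieBr b c)`. -/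

def lieCoeffTPowLeft (k t : ℕ) : K := (-1) ^ t * ((t ! : K) * ((t + k + 1 : ℕ) : K))⁻¹

def lieCoeffTPowRight (k t : ℕ) : K := (-1) ^ t * (k ! : K) * ((t + k + 1)! : K)⁻¹

def lieCoeffNested (n : ℕ) : K := (-1) ^ n * ((n + 2)! : K)⁻¹

theorem lieCoeffTPowLeft_zero : lieCoeffTPowLeft 0 = (lieCoeff : ℕ → K) := by
  funext t
  simp only [lieCoeffTPowLeft, lieCoeff, Nat.factorial_succ, add_zero]
  push_cast
  ring

theorem lieCoeffTPowRight_zero : lieCoeffTPowRight 0 = (lieCoeff : ℕ → K) := by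
  funext t
  simp [lieCoeffTPowRight, lieCoeff]

variable [CharZero K]

theorem derivCoeff_lieCoeffTPowLeft (k : ℕ) :
    derivCoeff (lieCoeffTPowLeft k) = -(lieCoeffTPowLeft (k + 1) : ℕ → K) := by
  funext t
  simp only [derivCoeff, lieCoeffTPowLeft, Pi.neg_apply, Nat.factorial_succ]
  have : ((t + k + 2 : ℕ) : K) ≠ 0 := Nat.cast_ne_zero.2 (Nat.succ_ne_zero _)
  have : ((t ! : ℕ) : K) ≠ 0 := Nat.cast_ne_zero.2 t.factorial_ne_zero
  push_cast at *
  field_simp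
  ring

theorem lieCoeffTPowRight_add_derivCoeff (k : ℕ) :
    lieCoeffTPowRight k + derivCoeff (lieCoeffTPowRight k)
      = (lieCoeffTPowRight (k + 1) : ℕ → K) := by
  funext t
  simp only [derivCoeff, lieCoeffTPowRight, Pi.add_apply,
    show t + 1 + k + 1 = t + k + 1 + 1 by ring, show t + (k + 1) + 1 = t + k + 1 + 1 by ring,
    Nat.factorial_succ]
  have : ((t + k + 1)! : K) ≠ 0 := Nat.cast_ne_zero.2 (Nat.factorial_ne_zero _)
  have : ((t + k + 1 + 1 : ℕ) : K) ≠ 0 := Nat.cast_ne_zero.2 (Nat.succ_ne_zero _)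
  push_cast at *
  field_simp
  ring

theorem lieCoeff_mul_lieCoeffTPowRight (s t : ℕ) :
    lieCoeff s * lieCoeffTPowRight (s + 1) t = (lieCoeffNested (t + s) : K) := by
  have : ((s + 1)! : K) ≠ 0 := Nat.cast_ne_zero.2 (Nat.factorial_ne_zero _)
  rw [lieCoeff, lieCoeffTPowRight, lieCoeffNested, show t + (s + 1) + 1 = t + s + 2 by ring]
  field_simp
  ring

theorem lieCoeffNested_mul_choose (i m : ℕ) :
    lieCoeffNested (i + m) * ((i + m + 1).choose (i + 1) : K)
      = lieCoeff i * lieCoeffTPowLeft (i + 1) m := by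
  have hchoose := Nat.add_choose_mul_factorial_mul_factorial m (i + 1)
  rw [show m + (i + 1) = i + m + 1 by ring] at hchoose
  have : ((i + m + 2 : ℕ) : K) ≠ 0 := Nat.cast_ne_zero.2 (Nat.succ_ne_zero _)
  have : ((i + m + 1).choose (i + 1) : K) ≠ 0 :=
    Nat.cast_ne_zero.2 (Nat.choose_pos (by omega)).ne'
  have : ((i + 1)! : K) ≠ 0 := Nat.cast_ne_zero.2 (Nat.factorial_ne_zero _)
  have : (m ! : K) ≠ 0 := Nat.cast_ne_zero.2 (Nat.factorial_ne_zero _)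
  rw [lieCoeffNested, lieCoeff, lieCoeffTPowLeft, show i + m + 2 = i + m + 1 + 1 by ring,
    Nat.factorial_succ (i + m + 1), show m + (i + 1) + 1 = i + m + 1 + 1 by ring, ← hchoose]
  push_cast at *
  field_simp
  ring

theorem sum_antidiagonal_lieCoeff_mul (n : ℕ) :
    ∑ p ∈ antidiagonal n, lieCoeff p.1 * ((-1) ^ (p.1 + 1 + p.2) * (p.2 ! : K)⁻¹)
      = -lieCoeff n := by
  have hterm : ∀ p ∈ antidiagonal n,
      lieCoeff p.1 * ((-1) ^ (p.1 + 1 + p.2) * (p.2 ! : K)⁻¹)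
        = -((n + 1)! : K)⁻¹ * ((-1) ^ p.2 * ((n + 1).choose p.2 : K)) := by
    rintro ⟨i, j⟩ hij
    rw [HasAntidiagonal.mem_antidiagonal] at hij
    subst hij
    have hchoose := Nat.add_choose_mul_factorial_mul_factorial (i + 1) j
    have : ((i + 1)! : K) ≠ 0 := Nat.cast_ne_zero.2 (Nat.factorial_ne_zero _)
    have : (j ! : K) ≠ 0 := Nat.cast_ne_zero.2 (Nat.factorial_ne_zero _)
    have : ((i + 1 + j).choose j : K) ≠ 0 := Nat.cast_ne_zero.2 (Nat.choose_pos (by omega)).ne'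
    have hsign : ((-1 : K) ^ i) ^ 2 = 1 := by rw [← pow_mul, pow_mul', neg_one_sq, one_pow]
    rw [lieCoeff, show i + j + 1 = i + 1 + j by ring, ← hchoose]
    push_cast at *
    field_simp
    linear_combination -(-1 : K) ^ j * hsign
  have halt : ∑ p ∈ antidiagonal n, (-1 : K) ^ p.2 * ((n + 1).choose p.2 : K) = (-1) ^ n := by
    rw [← Nat.sum_antidiagonal_swap]
    simp only [Prod.snd_swap]
    rw [Nat.sum_antidiagonal_eq_sum_range_succ_mk]
    exact_mod_cast Int.alternating_sum_range_choose_eq_choose (n := n) (m := n) |>.trans (by simp)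
  rw [sum_congr rfl hterm, ← mul_sum, halt, lieCoeff]
  ring

end Coefficients

section LieBracket

variable {K : Type*} [Field K] [CharZero K] {R : Type*} [AddCommGroup R] [Module K R]
  (V : VertexLieAlgebra K R)

theorem lieBr_T_pow_left (k : ℕ) (a b : R) :
    V.lieBr ((V.T ^ k) a) b = (V.T ^ k) (V.bracketWith (lieCoeffTPowLeft k) a b) := by
  induction k generalizing a with
  | zero => simp [lieBr_eq_bracketWith, lieCoeffTPowLeft_zero]
  | succ k ih =>
    rw [pow_succ, Module.End.mul_apply, Module.End.mul_apply, ih, V.bracketWith_T_left,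
      derivCoeff_lieCoeffTPowLeft, bracketWith_neg_coeff]
    simp only [map_neg, neg_neg]

theorem lieBr_T_pow_right (k : ℕ) (a b : R) :
    V.lieBr a ((V.T ^ k) b) = (V.T ^ k) (V.bracketWith (lieCoeffTPowRight k) a b) := by
  induction k generalizing b with
  | zero => simp [lieBr_eq_bracketWith, lieCoeffTPowRight_zero]
  | succ k ih =>
    rw [pow_succ, Module.End.mul_apply, Module.End.mul_apply, ih, V.bracketWith_T_right,
      lieCoeffTPowRight_add_derivCoeff]

theorem lieBr_skew (a b : R) : V.lieBr a b = -V.lieBr b a := by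
  obtain ⟨N, hN⟩ := eventually_atTop.1
    ((V.eventually_p_eq_zero a b).and (V.eventually_p_eq_zero b a))
  have hab : ∀ t, N ≤ t → V.p t a b = 0 := fun t ht => (hN t ht).1
  have hba : ∀ t, N ≤ t → V.p t b a = 0 := fun t ht => (hN t ht).2
  calc V.lieBr a b
      = ∑ r ∈ range N, ∑ i ∈ range N, (lieCoeff r * ((-1) ^ (r + 1 + i) * (i ! : K)⁻¹)) •
          (V.T ^ (r + i + 1)) (V.p (r + i) b a) := by
        rw [lieBr_eq_bracketWith, bracketWith_eq_sum _ hab]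
        refine sum_congr rfl fun r _ => ?_
        rw [V.skew a b N hba r, map_sum, smul_sum]
        refine sum_congr rfl fun i _ => ?_
        rw [map_smul, smul_smul, ← Module.End.mul_apply, ← pow_add, add_right_comm]
    _ = ∑ n ∈ range N, ∑ p ∈ antidiagonal n,
          (lieCoeff p.1 * ((-1) ^ (p.1 + 1 + p.2) * (p.2 ! : K)⁻¹)) •
            (V.T ^ (n + 1)) (V.p n b a) := by
        rw [sum_range_sum_range_eq_sum_antidiagonal fun r i hri => by
          rw [hba _ hri, map_zero, smul_zero]]
        exact sum_congr rfl fun n _ => sum_congr rfl fun p hp => by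
          rw [HasAntidiagonal.mem_antidiagonal.1 hp]
    _ = -V.lieBr b a := by
        simp only [← sum_smul, sum_antidiagonal_lieCoeff_mul, neg_smul, sum_neg_distrib,
          lieBr_eq_bracketWith, bracketWith_eq_sum _ hba]

variable {V} in
theorem lieBr_lieBr_left_eq_sum {a b c : R} {N : ℕ} (hab : ∀ t, N ≤ t → V.p t a b = 0)
    (habc : ∀ t, N ≤ t → ∀ i, V.p t (V.p i a b) c = 0) :
    V.lieBr (V.lieBr a b) c = ∑ i ∈ range N, ∑ m ∈ range N,
      (lieCoeff i * lieCoeffTPowLeft (i + 1) m : K) •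
        (V.T ^ (i + m + 2)) (V.p m (V.p i a b) c) := by
  rw [lieBr_eq_bracketWith, bracketWith_eq_sum _ hab, bracketWith_sum_smul_left,
    ← lieBr_eq_bracketWith]
  refine sum_congr rfl fun i _ => ?_
  rw [lieBr_T_pow_left, smul_T_pow_bracketWith _ _ _ fun t ht => habc t ht i]
  exact sum_congr rfl fun m _ => by rw [show i + 1 + m + 1 = i + m + 2 by ring]

variable {V} in
theorem lieBr_lieBr_right_eq_sum {a b c : R} {N : ℕ} (hbc : ∀ t, N ≤ t → V.p t b c = 0)
    (habc : ∀ t, N ≤ t → ∀ s, V.p t a (V.p s b c) = 0) :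
    V.lieBr a (V.lieBr b c) = ∑ s ∈ range N, ∑ t ∈ range N,
      (lieCoeffNested (t + s) : K) • (V.T ^ (t + s + 2)) (V.p t a (V.p s b c)) := by
  rw [lieBr_eq_bracketWith, bracketWith_eq_sum _ hbc, bracketWith_sum_smul_right,
    ← lieBr_eq_bracketWith]
  refine sum_congr rfl fun s _ => ?_
  rw [lieBr_T_pow_right, smul_T_pow_bracketWith _ _ _ fun t ht => habc t ht s]
  exact sum_congr rfl fun t _ => by
    rw [lieCoeff_mul_lieCoeffTPowRight, show s + 1 + t + 1 = t + s + 2 by ring]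

variable {V} in
theorem sum_sum_lieCoeffNested_smul_jacobi {a b c : R} {L : ℕ}
    (h : ∀ i m, L ≤ i + m → V.p m (V.p i a b) c = 0) :
    ∑ t ∈ range L, ∑ s ∈ range L, (lieCoeffNested (t + s) : K) •
        (V.T ^ (t + s + 2)) (V.p t a (V.p s b c) - V.p s b (V.p t a c))
      = ∑ i ∈ range L, ∑ m ∈ range L, (lieCoeff i * lieCoeffTPowLeft (i + 1) m : K) •
        (V.T ^ (i + m + 2)) (V.p m (V.p i a b) c) := by
  set Y : ℕ → ℕ → R := fun n i => (V.T ^ (n + 2)) (V.p (n - i) (V.p i a b) c)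
  have hjacobi : ∀ t s, (V.T ^ (t + s + 2)) (V.p t a (V.p s b c) - V.p s b (V.p t a c))
      = ∑ i ∈ range (t + 1), t.choose i • Y (t + s) i := by
    intro t s
    rw [V.jacobi, map_sum]
    exact sum_congr rfl fun i _ => by rw [map_smul, Nat.cast_smul_eq_nsmul]
  calc _ = ∑ t ∈ range L, ∑ s ∈ range L, (lieCoeffNested (t + s) : K) •
          ∑ i ∈ range (t + 1), t.choose i • Y (t + s) i := by simp only [hjacobi]
    _ = ∑ n ∈ range L, (lieCoeffNested n : K) •
          ∑ p ∈ antidiagonal n, ∑ i ∈ range (p.1 + 1), p.1.choose i • Y n i := by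
        rw [sum_range_sum_range_eq_sum_antidiagonal]
        · refine sum_congr rfl fun n _ => ?_
          rw [smul_sum]
          exact sum_congr rfl fun p hp => by rw [HasAntidiagonal.mem_antidiagonal.1 hp]
        · intro t s hts
          refine smul_eq_zero_of_right _ (sum_eq_zero fun i hi => ?_)
          rw [mem_range] at hi
          simp only [Y, h i (t + s - i) (by omega), map_zero, smul_zero]
    _ = ∑ n ∈ range L, ∑ p ∈ antidiagonal n,
          (lieCoeffNested (p.1 + p.2) * ((p.1 + p.2 + 1).choose (p.1 + 1) : K)) •
            (V.T ^ (p.1 + p.2 + 2)) (V.p p.2 (V.p p.1 a b) c) := by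
        refine sum_congr rfl fun n _ => ?_
        rw [sum_antidiagonal_sum_range_choose_nsmul, (Nat.sum_antidiagonal_subst (f := fun p n =>
            (lieCoeffNested n * ((n + 1).choose (p.1 + 1) : K)) •
              (V.T ^ (n + 2)) (V.p p.2 (V.p p.1 a b) c))).symm,
          Nat.sum_antidiagonal_eq_sum_range_succ_mk, smul_sum]
        exact sum_congr rfl fun i _ => by rw [mul_smul, Nat.cast_smul_eq_nsmul]
    _ = _ := by
        simp only [lieCoeffNested_mul_choose]
        exact (sum_range_sum_range_eq_sum_antidiagonal (g := fun i m =>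
          (lieCoeff i * lieCoeffTPowLeft (i + 1) m : K) •
            (V.T ^ (i + m + 2)) (V.p m (V.p i a b) c))
          fun i m him => by simp only [h i m him, map_zero, smul_zero]).symm

theorem lieBr_lieBr (a b c : R) :
    V.lieBr (V.lieBr a b) c = V.lieBr a (V.lieBr b c) - V.lieBr b (V.lieBr a c) := by
  obtain ⟨N, hN⟩ := eventually_atTop.1 <| (V.eventually_p_eq_zero a b).and <|
    (V.eventually_p_eq_zero b c).and <| (V.eventually_p_eq_zero a c).and <|
    (V.eventually_forall_p_p_left a b c).and <|
    (V.eventually_forall_p_p_right a b c).and (V.eventually_forall_p_p_right b a c)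
  simp only [imp_and, forall_and] at hN
  obtain ⟨hab, hbc, hac, habc, habc', hbac⟩ := hN
  have mono {P : ℕ → Prop} (h : ∀ t, N ≤ t → P t) : ∀ t, 2 * N ≤ t → P t :=
    fun t ht => h t (by omega)
  have hvanish : ∀ i m, 2 * N ≤ i + m → V.p m (V.p i a b) c = 0 := by
    intro i m him
    rcases le_or_gt N i with hi | hi
    · rw [hab i hi, map_zero, LinearMap.zero_apply]
    · exact habc m (by omega) i
  rw [lieBr_lieBr_left_eq_sum (mono hab) (mono habc),
    lieBr_lieBr_right_eq_sum (mono hbc) (mono habc'),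
    lieBr_lieBr_right_eq_sum (mono hac) (mono hbac),
    ← sum_sum_lieCoeffNested_smul_jacobi hvanish, eq_comm, sum_comm, ← sum_sub_distrib]
  refine sum_congr rfl fun t _ => ?_
  rw [← sum_sub_distrib]
  exact sum_congr rfl fun s _ => by rw [add_comm s t, ← smul_sub, ← map_sub]

theorem lieBr_jacobi (a b c : R) :
    V.lieBr (V.lieBr a b) c + V.lieBr (V.lieBr b c) a + V.lieBr (V.lieBr c a) b = 0 := by
  have hbca : V.lieBr (V.lieBr b c) a = -V.lieBr a (V.lieBr b c) := V.lieBr_skew _ _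
  have hcab : V.lieBr (V.lieBr c a) b = V.lieBr b (V.lieBr a c) := by
    rw [V.lieBr_skew c a, lieBr_eq_bracketWith, bracketWith_neg_left, ← lieBr_eq_bracketWith,
      V.lieBr_skew _ b, neg_neg]
  rw [V.lieBr_lieBr, hbca, hcab]
  abel

end LieBracket

end VertexLieAlgebra

/-- For a vertex Lie algebra `R`, the bracket `[a,b]_lie = Σ (−1)^i T^{i+1}(a_i b)/(i+1)!`
is a Lie bracket: it is bilinear, skew-symmetric and satisfies the Jacobi identity;
moreover `T` is a derivation of it. -/
theorem lieBr_is_lie_bracket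
    (K : Type*) [Field K] [CharZero K]
    (R : Type*) [AddCommGroup R] [Module K R]
    (V : VertexLieAlgebra K R) :
    (∀ a a' b : R, V.lieBr (a + a') b = V.lieBr a b + V.lieBr a' b) ∧
    (∀ a b b' : R, V.lieBr a (b + b') = V.lieBr a b + V.lieBr a b') ∧
    (∀ (k : K) (a b : R), V.lieBr (k • a) b = k • V.lieBr a b) ∧
    (∀ (k : K) (a b : R), V.lieBr a (k • b) = k • V.lieBr a b) ∧
    (∀ a b : R, V.lieBr a b = - V.lieBr b a) ∧
    (∀ a b c : R,
      V.lieBr (V.lieBr a b) c + V.lieBr (V.lieBr b c) a + V.lieBr (V.lieBr c a) b = 0) ∧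
    (∀ a b : R, V.T (V.lieBr a b) = V.lieBr (V.T a) b + V.lieBr a (V.T b)) :=
  ⟨V.bracketWith_add_left _, V.bracketWith_add_right _,
    V.bracketWith_smul_left _, V.bracketWith_smul_right _,
    V.lieBr_skew, V.lieBr_jacobi, V.T_bracketWith _⟩
end

section
/- Let K be a field of characteristic zero and R a K-vector space equipped with a linear operator T and bilinear products (a,b) ↦ a_t b for t ∈ ℕ satisfying: (Ta)_t b = −t·a_{t−1} b (with a_{−1}b := 0), T(a_t b) = (Ta)_t b + a_t(Tb), and weak locality (for all a, b ∈ R there is N with a_t b = 0 for all t ≥ N). If c ∈ R is a torsion element of the K[T]-module R, i.e. p(T)c = 0 for some nonzero polynomial p ∈ K[T], then c is central for all the products: c_t a = 0 and a_t c = 0 for all a ∈ R and all t ∈ ℕ. (The torsion submodule of a conformal algebra is contained in its centre.) -/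
/-!
Both `x ↦ x_s a` and `x ↦ a_s x` are families `φ_s` of linear maps with
`φ_{s+1}(T x) = L(φ_{s+1} x) + ε (s+1) φ_s x` (with `L = 0, ε = -1`, resp. `L = T, ε = 1`).
If `φ_s c = 0` for all `s > u`, this gives `φ_s (T^i c) = 0` for `s > u + i` and
`φ_{u+i}(T^i c) = ε^i (u+i)!/u! · φ_u c`. Applying `φ_{u+d}` to `q(T) c = 0`, with `d = deg q`,
only the leading term survives, so `φ_u c = 0`; weak locality starts a downward induction on `u`.
-/

open Polynomial

section Translation

variable {K R M : Type*} [CommRing K] [AddCommGroup R] [Module K R] [AddCommGroup M] [Module K M]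
  {T : Module.End K R} {L : Module.End K M} {ε : K} {φ : ℕ → R →ₗ[K] M}

theorem apply_pow_apply_eq_zero_of_lt
    (hφ : ∀ s x, φ (s + 1) (T x) = L (φ (s + 1) x) + (ε * ((s + 1 : ℕ) : K)) • φ s x)
    {c : R} {u : ℕ} (hc : ∀ s, u < s → φ s c = 0) (i : ℕ) :
    ∀ s, u + i < s → φ s ((T ^ i) c) = 0 := by
  induction i with
  | zero => simpa using hc
  | succ i ih =>
    intro s hs
    obtain ⟨s, rfl⟩ : ∃ s', s = s' + 1 := ⟨s - 1, by omega⟩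
    rw [pow_succ', Module.End.mul_apply, hφ, ih (s + 1) (by omega), ih s (by omega)]
    simp

theorem apply_pow_apply_eq_descFactorial_smul
    (hφ : ∀ s x, φ (s + 1) (T x) = L (φ (s + 1) x) + (ε * ((s + 1 : ℕ) : K)) • φ s x)
    {c : R} {u : ℕ} (hc : ∀ s, u < s → φ s c = 0) (i : ℕ) :
    φ (u + i) ((T ^ i) c) = (ε ^ i * ((u + i).descFactorial i : K)) • φ u c := by
  induction i with
  | zero => simp
  | succ i ih =>
    rw [pow_succ', Module.End.mul_apply, ← add_assoc, hφ,
      apply_pow_apply_eq_zero_of_lt hφ hc i (u + i + 1) (by omega), ih, map_zero, zero_add,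
      smul_smul, Nat.succ_descFactorial_succ]
    congr 1
    push_cast
    ring

end Translation

section Torsion

variable {K R M : Type*} [Field K] [CharZero K] [AddCommGroup R] [Module K R] [AddCommGroup M]
  [Module K M] {T : Module.End K R} {L : Module.End K M} {ε : K} {φ : ℕ → R →ₗ[K] M}

theorem apply_eq_zero_of_forall_lt_of_aeval_eq_zero
    (hφ : ∀ s x, φ (s + 1) (T x) = L (φ (s + 1) x) + (ε * ((s + 1 : ℕ) : K)) • φ s x)
    (hε : ε ≠ 0) {q : K[X]} (hq : q ≠ 0) {c : R} (hqc : aeval T q c = 0) {u : ℕ}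
    (hc : ∀ s, u < s → φ s c = 0) : φ u c = 0 := by
  set d := q.natDegree
  have expand : φ (u + d) (aeval T q c) =
      ∑ i ∈ Finset.range (d + 1), q.coeff i • φ (u + d) ((T ^ i) c) := by
    simp only [aeval_eq_sum_range, LinearMap.sum_apply, LinearMap.smul_apply, map_sum, map_smul, d]
  have leading : ∑ i ∈ Finset.range (d + 1), q.coeff i • φ (u + d) ((T ^ i) c) =
      q.coeff d • φ (u + d) ((T ^ d) c) := by
    refine Finset.sum_eq_single_of_mem d (Finset.self_mem_range_succ d) fun i hi hid => ?_
    rw [apply_pow_apply_eq_zero_of_lt hφ hc i (u + d) (by grind), smul_zero]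
  have hdesc : ((u + d).descFactorial d : K) ≠ 0 :=
    Nat.cast_ne_zero.mpr fun h => by rw [Nat.descFactorial_eq_zero_iff_lt] at h; omega
  rw [hqc, map_zero, leading, apply_pow_apply_eq_descFactorial_smul hφ hc, smul_smul] at expand
  refine (smul_eq_zero.mp expand.symm).resolve_left ?_
  exact mul_ne_zero (leadingCoeff_ne_zero.mpr hq) (mul_ne_zero (pow_ne_zero d hε) hdesc)

theorem apply_eq_zero_of_aeval_eq_zero
    (hφ : ∀ s x, φ (s + 1) (T x) = L (φ (s + 1) x) + (ε * ((s + 1 : ℕ) : K)) • φ s x)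
    (hε : ε ≠ 0) {q : K[X]} (hq : q ≠ 0) {c : R} (hqc : aeval T q c = 0)
    {N : ℕ} (hN : ∀ t, N ≤ t → φ t c = 0) (t : ℕ) : φ t c = 0 :=
  Nat.strong_decreasing_induction ⟨N, fun t ht => hN t ht.le⟩
    (fun _ hu => apply_eq_zero_of_forall_lt_of_aeval_eq_zero hφ hε hq hqc hu) t

end Torsion

theorem torsion_is_central_general
    (K : Type*) [Field K] [CharZero K]
    (R : Type*) [AddCommGroup R] [Module K R]
    (T : Module.End K R)
    (p : ℕ → R →ₗ[K] R →ₗ[K] R)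
    (weak_local : ∀ a b : R, ∃ N : ℕ, ∀ t : ℕ, N ≤ t → p t a b = 0)
    (trans_succ : ∀ (t : ℕ) (a b : R), p (t + 1) (T a) b = -(((t + 1 : ℕ) : K)) • p t a b)
    (trans_T : ∀ (t : ℕ) (a b : R), T (p t a b) = p t (T a) b + p t a (T b))
    (c : R)
    (htor : ∃ q : Polynomial K, q ≠ 0 ∧ (Polynomial.aeval T q) c = 0) :
    ∀ (a : R) (t : ℕ), p t c a = 0 ∧ p t a c = 0 := by
  obtain ⟨q, hq, hqc⟩ := htor
  intro a t
  have translate_left : ∀ s x, p (s + 1) (T x) a =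
      (0 : Module.End K R) (p (s + 1) x a) + ((-1 : K) * ((s + 1 : ℕ) : K)) • p s x a := by
    simp [trans_succ]
  have translate_right : ∀ s x, p (s + 1) a (T x) =
      T (p (s + 1) a x) + ((1 : K) * ((s + 1 : ℕ) : K)) • p s a x := by
    intro s x
    rw [trans_T, trans_succ]
    module
  obtain ⟨N₁, hN₁⟩ := weak_local c a
  obtain ⟨N₂, hN₂⟩ := weak_local a c
  exact ⟨apply_eq_zero_of_aeval_eq_zero (φ := fun s => (p s).flip a) translate_left
      (neg_ne_zero.mpr one_ne_zero) hq hqc hN₁ t,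
    apply_eq_zero_of_aeval_eq_zero (φ := fun s => p s a) translate_right one_ne_zero hq hqc
      hN₂ t⟩

/-- The torsion submodule of a conformal algebra is contained in its centre:
if `R` is a `K`-vector space with an operator `T` and weakly local `t`-th products
satisfying the translation axioms, then any `K[T]`-torsion element `c` satisfies
`c_t a = 0` and `a_t c = 0` for all `a` and `t`. -/
theorem torsion_is_central
    (K : Type*) [Field K] [CharZero K]
    (R : Type*) [AddCommGroup R] [Module K R]
    (T : Module.End K R)
    (p : ℕ → R →ₗ[K] R →ₗ[K] R)
    (weak_local : ∀ a b : R, ∃ N : ℕ, ∀ t : ℕ, N ≤ t → p t a b = 0)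
    (trans_zero : ∀ a b : R, p 0 (T a) b = 0)
    (trans_succ : ∀ (t : ℕ) (a b : R), p (t + 1) (T a) b = -(((t + 1 : ℕ) : K)) • p t a b)
    (trans_T : ∀ (t : ℕ) (a b : R), T (p t a b) = p t (T a) b + p t a (T b))
    (c : R)
    (htor : ∃ q : Polynomial K, q ≠ 0 ∧ (Polynomial.aeval T q) c = 0) :
    ∀ (a : R) (t : ℕ), p t c a = 0 ∧ p t a c = 0 :=
  torsion_is_central_general K R T p weak_local trans_succ trans_T c htor
end

section
/- Let K be a field of characteristic zero and let p ∈ K[T, λ] be a polynomial in two commuting variables satisfying: (i) the conformal Jacobi identity for a rank-one generator, p(−μ, λ)·p(T, μ) = p(T+λ, μ−λ)·p(T, λ) − p(T+μ−λ, λ)·p(T, μ−λ), as an identity in K[T, λ, μ]; and (ii) the conformal skew-symmetry p(T, λ) = −p(T, −λ−T). Then there exists c ∈ K such that p = c·(T + 2λ). Consequently, every even vertex Lie algebra that is a free K[T]-module of rank 1 (with λ-bracket of the generator given by 1_λ 1 = p(T,λ)) is either abelian (p = 0) or isomorphic to the Witt vertex Lie algebra, whose λ-bracket is L_λ L = (T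 + 2λ)L. -/
/-!
Put `μ = λ` in the Jacobi identity and cancel `p(T,λ)`: a homogeneous solution `q` of degree `d`
satisfies `(-λ)^k q(-λ,λ) = (T+λ)^k q(T+λ,0) - T^k q(T,0)`, where `k` counts the factors
`λ(T+λ)` divided out so far (initially `k = 0`). Since `q(T,0) = q(1,0) T^d` and
`q(-λ,λ) = q(-1,1) λ^d`, the values at `(T,λ) = (0,1), (1,1)` give `q(1,0) (2^(d+k) - 2) = 0`.
If `q(1,0) = 0` then also `q(-1,1) = 0`, so `λ(T+λ)` divides `q`; the quotient is again skew and
satisfies the Jacobi identity twisted once more, and a descent on `d` rules this out.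
Otherwise `d + k = 1`, so `d = 1`, `k = 0`, and the relation forces `q = q(1,0) (T + 2λ)`.
Applied to the top homogeneous component of `p`, this leaves only a constant remainder, which
skew-symmetry kills.
-/

open MvPolynomial

/-- Substitution of the two variables `T = X 0`, `λ = X 1` of `P` by polynomials
in the three variables `T = X 0`, `λ = X 1`, `μ = X 2`. -/
noncomputable def psub {K : Type*} [Field K] (P : MvPolynomial (Fin 2) K)
    (u v : MvPolynomial (Fin 3) K) : MvPolynomial (Fin 3) K :=
  MvPolynomial.aeval ![u, v] P

namespace MvPolynomial

variable {σ τ R : Type*}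

section CommSemiring

variable [CommSemiring R]

lemma IsHomogeneous.aeval_algebraMap_mul {A : Type*} [CommSemiring A] [Algebra R A]
    {φ : MvPolynomial σ R} {n : ℕ} (hφ : φ.IsHomogeneous n) (x : σ → R) (w : A) :
    MvPolynomial.aeval (fun i => algebraMap R A (x i) * w) φ =
      algebraMap R A (eval x φ) * w ^ n := by
  conv_lhs => rw [φ.as_sum]
  conv_rhs => rw [φ.as_sum]
  rw [map_sum, map_sum, map_sum, Finset.sum_mul]
  refine Finset.sum_congr rfl fun m hm => ?_
  rw [aeval_monomial, eval_monomial, map_mul, mul_assoc, Finsupp.prod, Finsupp.prod,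
    map_prod, hφ.degree_eq_sum_deg_support hm, ← Finset.prod_pow_eq_pow_sum,
    ← Finset.prod_mul_distrib]
  simp only [mul_pow, map_pow]

lemma totalDegree_aeval_le {g : σ → MvPolynomial τ R} (hg : ∀ i, (g i).IsHomogeneous 1)
    (φ : MvPolynomial σ R) : (aeval g φ).totalDegree ≤ φ.totalDegree := by
  conv_lhs => rw [φ.as_sum, map_sum]
  refine (totalDegree_finsetSum _ _).trans (Finset.sup_le fun m hm => ?_)
  have h := (isHomogeneous_monomial (coeff m φ) (rfl : m.degree = _)).aeval g hg
  rw [one_mul] at h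
  exact h.totalDegree_le.trans (le_totalDegree hm)

end CommSemiring

section CommRing

variable [CommRing R]

lemma totalDegree_sub_homogeneousComponent_lt {φ : MvPolynomial σ R} (h : 0 < φ.totalDegree) :
    (φ - homogeneousComponent φ.totalDegree φ).totalDegree < φ.totalDegree := by
  have hsum : φ - homogeneousComponent φ.totalDegree φ =
      ∑ i ∈ Finset.range φ.totalDegree, homogeneousComponent i φ := by
    rw [sub_eq_iff_eq_add, ← Finset.sum_range_succ, sum_homogeneousComponent]
  rw [hsum]
  refine (totalDegree_finsetSum _ _).trans_lt ((Finset.sup_lt_iff h).mpr fun i hi => ?_)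
  exact (homogeneousComponent_isHomogeneous i φ).totalDegree_le.trans_lt (Finset.mem_range.mp hi)

lemma IsHomogeneous.eq_zero_of_totalDegree_lt {φ : MvPolynomial σ R} {n : ℕ}
    (hφ : φ.IsHomogeneous n) (h : φ.totalDegree < n) : φ = 0 := by
  by_contra h0
  exact h.ne (hφ.totalDegree h0)

lemma dvd_sub_aeval_of_forall_dvd {g : MvPolynomial σ R} {f : σ → MvPolynomial σ R}
    (hf : ∀ i, g ∣ X i - f i) (q : MvPolynomial σ R) : g ∣ q - aeval f q := by
  induction q using MvPolynomial.induction_on with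
  | C a => simp
  | add p r hp hr => simpa [add_sub_add_comm] using dvd_add hp hr
  | mul_X p i hp =>
    have h : p * X i - aeval f (p * X i) = (p - aeval f p) * X i + aeval f p * (X i - f i) := by
      rw [map_mul, aeval_X]; ring
    exact h ▸ dvd_add (hp.mul_right _) ((hf i).mul_left _)

attribute [local instance] MvPolynomial.gradedAlgebra in
lemma IsHomogeneous.of_mul_left [IsDomain R] {g h : MvPolynomial σ R} {m n : ℕ}
    (hg : g.IsHomogeneous m) (hg0 : g ≠ 0) (hgh : (g * h).IsHomogeneous n) :
    h.IsHomogeneous (n - m) := by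
  intro d hd
  have hcomp : homogeneousComponent (m + d.degree) (g * h) =
      g * homogeneousComponent d.degree h := by
    have := DirectSum.coe_decompose_mul_of_left_mem_of_le (homogeneousSubmodule σ R)
      (b := h) (n := m + d.degree) (mem_homogeneousSubmodule _ _ |>.mpr hg) (by omega)
    rw [Nat.add_sub_cancel_left] at this
    rw [← decomposition.decompose'_apply, ← decomposition.decompose'_apply]
    exact this
  have hne : g * homogeneousComponent d.degree h ≠ 0 := by
    refine mul_ne_zero hg0 fun h0 => hd ?_
    simpa [coeff_homogeneousComponent] using congrArg (coeff d) h0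
  rw [← hcomp, homogeneousComponent_of_mem (mem_homogeneousSubmodule _ _ |>.mpr hgh)] at hne
  have : m + d.degree = n := by by_contra h; exact hne (if_neg h)
  rw [← this, Finsupp.degree_eq_weight_one, Nat.add_sub_cancel_left]
  rfl

end CommRing

end MvPolynomial

section RankOne

variable {K : Type*} [Field K]

def IsSkew (q : MvPolynomial (Fin 2) K) : Prop :=
  aeval ![X 0, -X 1 - X 0] q = -q

/-- `jacobiator 0 p p = 0` is the conformal Jacobi identity for `1_λ 1 = p`; the twist `k` records
factors `λ(T+λ)` removed from both arguments, see `jacobiator_mul_mul`. -/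
noncomputable def jacobiator (k : ℕ) (p q : MvPolynomial (Fin 2) K) : MvPolynomial (Fin 3) K :=
  (-X 2) ^ k * psub p (-X 2) (X 1) * psub q (X 0) (X 2) -
    ((X 0 + X 1) ^ k * psub p (X 0 + X 1) (X 2 - X 1) * psub q (X 0) (X 1) -
      (X 0 + X 2 - X 1) ^ k * psub p (X 0 + X 2 - X 1) (X 1) * psub q (X 0) (X 2 - X 1))

lemma aeval_psub {S : Type*} [CommSemiring S] [Algebra K S] (f : Fin 3 → S)
    (r : MvPolynomial (Fin 2) K) (u v : MvPolynomial (Fin 3) K) :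
    aeval f (psub r u v) = aeval ![aeval f u, aeval f v] r := by
  rw [psub, comp_aeval_apply]
  congr 2
  ext i; fin_cases i <;> rfl

lemma isHomogeneous_psub {r : MvPolynomial (Fin 2) K} {n : ℕ} (hr : r.IsHomogeneous n)
    {u v : MvPolynomial (Fin 3) K} (hu : u.IsHomogeneous 1) (hv : v.IsHomogeneous 1) :
    (psub r u v).IsHomogeneous n := by
  unfold psub
  simpa only [one_mul] using hr.aeval ![u, v] (Fin.forall_fin_two.mpr ⟨hu, hv⟩)

lemma totalDegree_psub_le (r : MvPolynomial (Fin 2) K) {u v : MvPolynomial (Fin 3) K}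
    (hu : u.IsHomogeneous 1) (hv : v.IsHomogeneous 1) :
    (psub r u v).totalDegree ≤ r.totalDegree :=
  totalDegree_aeval_le (Fin.forall_fin_two.mpr ⟨hu, hv⟩) r

lemma X_mul_X_add_X_ne_zero : (X 1 * (X 0 + X 1) : MvPolynomial (Fin 2) K) ≠ 0 :=
  mul_ne_zero (X_ne_zero 1) fun h => by simpa using congrArg (eval ![1, 0]) h

lemma IsSkew.sub {p q : MvPolynomial (Fin 2) K} (hp : IsSkew p) (hq : IsSkew q) :
    IsSkew (p - q) := by
  rw [IsSkew, map_sub, hp, hq, neg_sub_neg, neg_sub]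

lemma IsSkew.eq_zero_of_totalDegree_eq_zero [CharZero K] {q : MvPolynomial (Fin 2) K}
    (hq : IsSkew q) (h : q.totalDegree = 0) : q = 0 := by
  rw [totalDegree_eq_zero_iff_eq_C] at h
  rw [h, IsSkew, aeval_C, algebraMap_eq, eq_neg_iff_add_eq_zero, ← two_mul] at hq
  rw [h]
  simpa using hq

lemma IsSkew.of_mul_left {q : MvPolynomial (Fin 2) K} (hq : IsSkew (X 1 * (X 0 + X 1) * q)) :
    IsSkew q := by
  rw [IsSkew] at hq ⊢
  apply mul_left_cancel₀ X_mul_X_add_X_ne_zero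
  simp only [map_mul, map_add, aeval_X, Matrix.cons_val_zero, Matrix.cons_val_one] at hq
  linear_combination hq

lemma jacobiator_add_left (k : ℕ) (p p' q : MvPolynomial (Fin 2) K) :
    jacobiator k (p + p') q = jacobiator k p q + jacobiator k p' q := by
  simp only [jacobiator, psub, map_add]; ring

lemma jacobiator_add_right (k : ℕ) (p q q' : MvPolynomial (Fin 2) K) :
    jacobiator k p (q + q') = jacobiator k p q + jacobiator k p q' := by
  simp only [jacobiator, psub, map_add]; ring

lemma jacobiator_mul_mul (k : ℕ) (p q : MvPolynomial (Fin 2) K) :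
    jacobiator k (X 1 * (X 0 + X 1) * p) (X 1 * (X 0 + X 1) * q) =
      X 1 * (X 0 + X 2) * (X 2 - X 1) * jacobiator (k + 1) p q := by
  simp only [jacobiator, psub, map_mul, map_add, aeval_X, Matrix.cons_val_zero,
    Matrix.cons_val_one]
  ring

lemma aeval_jacobiator_diag (k : ℕ) (q : MvPolynomial (Fin 2) K) :
    aeval ![X 0, X 1, X 1] (jacobiator k q q) =
      q * ((-X 1) ^ k * aeval ![-X 1, X 1] q - (X 0 + X 1) ^ k * aeval ![X 0 + X 1, 0] q +
        X 0 ^ k * aeval ![X 0, 0] q) := by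
  have hid : aeval ![X 0, X 1] q = q := by
    conv_rhs => rw [← aeval_X_left_apply q]
    congr 2
    ext i; fin_cases i <;> rfl
  simp only [jacobiator, aeval_psub, map_sub, map_mul, map_pow, map_neg, map_add, aeval_X,
    Matrix.cons_val_zero, Matrix.cons_val_one, Matrix.cons_val_two, Matrix.tail_cons,
    Matrix.head_cons, sub_self, add_sub_cancel_right, hid]
  ring

lemma isHomogeneous_jacobiator (k : ℕ) {p q : MvPolynomial (Fin 2) K} {d e : ℕ}
    (hp : p.IsHomogeneous d) (hq : q.IsHomogeneous e) :
    (jacobiator k p q).IsHomogeneous (k + d + e) := by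
  have term : ∀ {w u v u' v' : MvPolynomial (Fin 3) K}, w.IsHomogeneous 1 →
      u.IsHomogeneous 1 → v.IsHomogeneous 1 → u'.IsHomogeneous 1 → v'.IsHomogeneous 1 →
      (w ^ k * psub p u v * psub q u' v').IsHomogeneous (k + d + e) := by
    intro w u v u' v' hw hu hv hu' hv'
    simpa using
      ((hw.pow k).mul (isHomogeneous_psub hp hu hv)).mul (isHomogeneous_psub hq hu' hv')
  have h0 := isHomogeneous_X K (0 : Fin 3)
  have h1 := isHomogeneous_X K (1 : Fin 3)
  have h2 := isHomogeneous_X K (2 : Fin 3)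
  exact (term h2.neg h2.neg h1 h0 h2).sub ((term (h0.add h1) (h0.add h1) (h2.sub h1) h0 h1).sub
    (term ((h0.add h2).sub h1) ((h0.add h2).sub h1) h1 h0 (h2.sub h1)))

lemma totalDegree_jacobiator_le (k : ℕ) (p q : MvPolynomial (Fin 2) K) :
    (jacobiator k p q).totalDegree ≤ k + p.totalDegree + q.totalDegree := by
  have term : ∀ {w u v u' v' : MvPolynomial (Fin 3) K}, w.IsHomogeneous 1 →
      u.IsHomogeneous 1 → v.IsHomogeneous 1 → u'.IsHomogeneous 1 → v'.IsHomogeneous 1 →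
      (w ^ k * psub p u v * psub q u' v').totalDegree ≤ k + p.totalDegree + q.totalDegree := by
    intro w u v u' v' hw hu hv hu' hv'
    refine (totalDegree_mul _ _).trans (add_le_add ((totalDegree_mul _ _).trans
      (add_le_add ?_ (totalDegree_psub_le p hu hv))) (totalDegree_psub_le q hu' hv'))
    simpa using (hw.pow k).totalDegree_le
  have h0 := isHomogeneous_X K (0 : Fin 3)
  have h1 := isHomogeneous_X K (1 : Fin 3)
  have h2 := isHomogeneous_X K (2 : Fin 3)
  refine (totalDegree_sub _ _).trans (max_le (term h2.neg h2.neg h1 h0 h2) ?_)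
  exact (totalDegree_sub _ _).trans (max_le (term (h0.add h1) (h0.add h1) (h2.sub h1) h0 h1)
    (term ((h0.add h2).sub h1) ((h0.add h2).sub h1) h1 h0 (h2.sub h1)))

lemma IsSkew.homogeneousComponent_totalDegree {P : MvPolynomial (Fin 2) K} (hP : IsSkew P)
    (hD : 0 < P.totalDegree) : IsSkew (homogeneousComponent P.totalDegree P) := by
  set Pd := homogeneousComponent P.totalDegree P
  have hlin : ∀ i, (![X 0, -X 1 - X 0] i : MvPolynomial (Fin 2) K).IsHomogeneous 1 := by
    simp only [Fin.forall_fin_two, Matrix.cons_val_zero, Matrix.cons_val_one]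
    exact ⟨isHomogeneous_X _ _, (isHomogeneous_X _ _).neg.sub (isHomogeneous_X _ _)⟩
  have hPd := homogeneousComponent_isHomogeneous P.totalDegree P
  have hPr := totalDegree_sub_homogeneousComponent_lt hD
  have key : aeval ![X 0, -X 1 - X 0] Pd + Pd =
      -(aeval ![X 0, -X 1 - X 0] (P - Pd) + (P - Pd)) := by
    rw [map_sub, hP]; ring
  suffices h : aeval ![X 0, -X 1 - X 0] Pd + Pd = 0 from eq_neg_of_add_eq_zero_left h
  have hσPd := hPd.aeval _ hlin
  rw [one_mul] at hσPd
  refine (hσPd.add hPd).eq_zero_of_totalDegree_lt ?_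
  rw [key, totalDegree_neg]
  exact (totalDegree_add _ _).trans_lt (max_lt ((totalDegree_aeval_le hlin _).trans_lt hPr) hPr)

lemma jacobiator_homogeneousComponent_totalDegree {P : MvPolynomial (Fin 2) K}
    (hP : jacobiator 0 P P = 0) (hD : 0 < P.totalDegree) :
    jacobiator 0 (homogeneousComponent P.totalDegree P)
      (homogeneousComponent P.totalDegree P) = 0 := by
  have hPr := totalDegree_sub_homogeneousComponent_lt hD
  have hPd := homogeneousComponent_isHomogeneous P.totalDegree P
  set Pd := homogeneousComponent P.totalDegree P
  have key : jacobiator 0 Pd Pd = -(jacobiator 0 Pd (P - Pd) + jacobiator 0 (P - Pd) P) := by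
    have h := hP
    rw [← add_sub_cancel Pd P, jacobiator_add_left, jacobiator_add_right, add_sub_cancel] at h
    linear_combination h
  refine (isHomogeneous_jacobiator 0 hPd hPd).eq_zero_of_totalDegree_lt ?_
  rw [key, totalDegree_neg]
  refine (totalDegree_add _ _).trans_lt (max_lt ?_ ?_)
  · refine (totalDegree_jacobiator_le 0 _ _).trans_lt ?_
    have := hPd.totalDegree_le
    omega
  · refine (totalDegree_jacobiator_le 0 _ _).trans_lt ?_
    omega

lemma aeval_C_mul_of_isHomogeneous {q : MvPolynomial (Fin 2) K} {d : ℕ}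
    (hq : q.IsHomogeneous d) (a b : K) (w : MvPolynomial (Fin 2) K) :
    aeval ![C a * w, C b * w] q = C (eval ![a, b] q) * w ^ d := by
  have hpair : ![C a * w, C b * w] = fun i => algebraMap K _ (![a, b] i) * w := by
    funext i; fin_cases i <;> rfl
  rw [hpair, hq.aeval_algebraMap_mul, algebraMap_eq]

lemma eval_relations_of_jacobiator_eq_zero {q : MvPolynomial (Fin 2) K} {d k : ℕ}
    (hd : q.IsHomogeneous d) (hd0 : 0 < d) (hq0 : q ≠ 0) (hj : jacobiator k q q = 0) :
    (-1) ^ k * eval ![-1, 1] q = eval ![1, 0] q ∧ eval ![1, 0] q * (2 ^ (d + k) - 2) = 0 := by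
  have e1 := aeval_C_mul_of_isHomogeneous hd (-1) 1 (X 1)
  have e2 := aeval_C_mul_of_isHomogeneous hd 1 0 (X 0 + X 1)
  have e3 := aeval_C_mul_of_isHomogeneous hd 1 0 (X 0)
  simp only [map_neg, map_one, map_zero, neg_mul, one_mul, zero_mul] at e1 e2 e3
  have hE : (-X 1 : MvPolynomial (Fin 2) K) ^ k * (C (eval ![-1, 1] q) * X 1 ^ d) -
      (X 0 + X 1) ^ k * (C (eval ![1, 0] q) * (X 0 + X 1) ^ d) +
        X 0 ^ k * (C (eval ![1, 0] q) * X 0 ^ d) = 0 := by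
    have h := aeval_jacobiator_diag k q
    rw [hj, map_zero, e1, e2, e3] at h
    exact (mul_eq_zero.mp h.symm).resolve_left hq0
  have h01 := congrArg (eval ![0, 1]) hE
  have h11 := congrArg (eval ![1, 1]) hE
  simp only [map_add, map_sub, map_mul, map_pow, map_neg, eval_C, eval_X, Matrix.cons_val_zero,
    Matrix.cons_val_one, zero_pow hd0.ne', mul_zero, add_zero, map_zero] at h01 h11
  refine ⟨by linear_combination h01, ?_⟩
  rw [pow_add]
  linear_combination h01 - h11

lemma exists_eq_mul_of_eval_eq_zero {q : MvPolynomial (Fin 2) K} {d : ℕ}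
    (hd : q.IsHomogeneous d) (hq0 : q ≠ 0) (h10 : eval ![1, 0] q = 0)
    (h11 : eval ![-1, 1] q = 0) :
    2 ≤ d ∧ ∃ r, r.IsHomogeneous (d - 2) ∧ q = X 1 * (X 0 + X 1) * r := by
  have e1 := aeval_C_mul_of_isHomogeneous hd 1 0 (X 0)
  have e2 := aeval_C_mul_of_isHomogeneous hd (-1) 1 (X 1)
  simp only [h10, h11, map_neg, map_one, map_zero, neg_mul, one_mul, zero_mul] at e1 e2
  obtain ⟨q₁, hq₁⟩ : X 1 ∣ q := by
    have h := dvd_sub_aeval_of_forall_dvd (g := X 1) (f := ![X 0, 0])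
      (by simp [Fin.forall_fin_two]) q
    rwa [e1, sub_zero] at h
  have e2' : aeval ![-X 1, X 1] q₁ = (0 : MvPolynomial (Fin 2) K) := by
    rw [hq₁, map_mul, aeval_X] at e2
    exact (mul_eq_zero.mp e2).resolve_left (X_ne_zero 1)
  obtain ⟨r, hr⟩ : X 0 + X 1 ∣ q₁ := by
    have h := dvd_sub_aeval_of_forall_dvd (g := X 0 + X 1) (f := ![-X 1, X 1])
      (by simp [Fin.forall_fin_two]) q₁
    rwa [e2', sub_zero] at h
  have hqr : q = X 1 * (X 0 + X 1) * r := by rw [hq₁, hr, mul_assoc]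
  have hs : (X 1 * (X 0 + X 1) : MvPolynomial (Fin 2) K).IsHomogeneous 2 :=
    (isHomogeneous_X K 1).mul ((isHomogeneous_X K 0).add (isHomogeneous_X K 1))
  have hr' : r.IsHomogeneous (d - 2) := hs.of_mul_left X_mul_X_add_X_ne_zero (hqr ▸ hd)
  have hd2 : d = 2 + (d - 2) := hd.inj_right (hqr ▸ hs.mul hr') hq0
  exact ⟨by omega, r, hr', hqr⟩

lemma isHomogeneous_witt : (X 0 + 2 * X 1 : MvPolynomial (Fin 2) K).IsHomogeneous 1 :=
  (isHomogeneous_X K 0).add (by simpa only [map_ofNat] using (isHomogeneous_X K 1).C_mul (2 : K))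

lemma eq_C_mul_of_isHomogeneous [CharZero K] {d k : ℕ} {q : MvPolynomial (Fin 2) K}
    (hd : q.IsHomogeneous d) (hq0 : q ≠ 0) (hj : jacobiator k q q = 0) (hs : IsSkew q) :
    k = 0 ∧ q = C (eval ![1, 0] q) * (X 0 + 2 * X 1) := by
  induction d using Nat.strong_induction_on generalizing k q with
  | _ d ih =>
  have hd0 : 0 < d := Nat.pos_of_ne_zero fun h =>
    hq0 (hs.eq_zero_of_totalDegree_eq_zero ((hd.totalDegree hq0).trans h))
  obtain ⟨hβ, hα⟩ := eval_relations_of_jacobiator_eq_zero hd hd0 hq0 hj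
  by_cases hα0 : eval ![1, 0] q = 0
  · exfalso
    have hβ0 : eval ![-1, 1] q = 0 := by simpa [hα0] using hβ
    obtain ⟨hd2, r, hr, rfl⟩ := exists_eq_mul_of_eval_eq_zero hd hq0 hα0 hβ0
    have hr0 : r ≠ 0 := by rintro rfl; simp at hq0
    have hG : (X 1 * (X 0 + X 2) * (X 2 - X 1) : MvPolynomial (Fin 3) K) ≠ 0 := fun h => by
      have h012 := congrArg (eval ![0, 1, 2]) h
      norm_num [show (![0, 1, 2] : Fin 3 → K) 2 = 2 from rfl] at h012
    rw [jacobiator_mul_mul] at hj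
    exact k.succ_ne_zero
      (ih (d - 2) (by omega) hr hr0 ((mul_eq_zero.mp hj).resolve_left hG) hs.of_mul_left).1
  · have hN : d + k = 1 := by
      have h2 : ((2 ^ (d + k) : ℕ) : K) = (2 ^ 1 : ℕ) := by
        push_cast
        exact sub_eq_zero.mp ((mul_eq_zero.mp hα).resolve_left hα0)
      exact Nat.pow_right_injective le_rfl (Nat.cast_injective h2)
    obtain ⟨rfl, rfl⟩ : d = 1 ∧ k = 0 := by omega
    refine ⟨rfl, ?_⟩
    by_contra hne
    obtain ⟨h21, -⟩ := exists_eq_mul_of_eval_eq_zero (hd.sub (isHomogeneous_witt.C_mul _))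
      (sub_ne_zero.mpr hne) (by simp)
      (by simp only [map_sub, map_mul, eval_C, map_add, eval_X, Matrix.cons_val_zero, eval_ofNat,
            Matrix.cons_val_one, Matrix.cons_val_fin_one, mul_one]
          linear_combination hβ)
    omega

lemma exists_eq_C_mul_of_isSkew [CharZero K] {P : MvPolynomial (Fin 2) K} (hs : IsSkew P)
    (hj : jacobiator 0 P P = 0) : ∃ c : K, P = C c * (X 0 + 2 * X 1) := by
  rcases Nat.eq_zero_or_pos P.totalDegree with h0 | hD
  · exact ⟨0, by rw [hs.eq_zero_of_totalDegree_eq_zero h0, map_zero, zero_mul]⟩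
  have hPr := totalDegree_sub_homogeneousComponent_lt hD
  have hPd := homogeneousComponent_isHomogeneous P.totalDegree P
  have hsPd := hs.homogeneousComponent_totalDegree hD
  have hjPd := jacobiator_homogeneousComponent_totalDegree hj hD
  set Pd := homogeneousComponent P.totalDegree P
  have hPd0 : Pd ≠ 0 := fun h => by simp [h] at hPr
  obtain ⟨-, hPdW⟩ := eq_C_mul_of_isHomogeneous hPd hPd0 hjPd hsPd
  have hD1 : P.totalDegree = 1 :=
    hPd.inj_right (by rw [hPdW]; exact isHomogeneous_witt.C_mul _) hPd0
  have hPPd : P - Pd = 0 := (hs.sub hsPd).eq_zero_of_totalDegree_eq_zero (by omega)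
  exact ⟨_, (sub_eq_zero.mp hPPd).trans hPdW⟩

end RankOne

/-- A polynomial `p(T,λ)` satisfying the rank-one conformal Jacobi identity
`p(−μ,λ)p(T,μ) = p(T+λ,μ−λ)p(T,λ) − p(T+μ−λ,λ)p(T,μ−λ)` and conformal
skew-symmetry `p(T,λ) = −p(T,−λ−T)` must be of the form `c·(T+2λ)`.
Consequently a vertex Lie algebra free of rank one over `K[T]` is abelian or
isomorphic to the Witt vertex Lie algebra `L_λ L = (T+2λ)L`. -/
theorem rank_one_vertex_lie_algebra_classification
    (K : Type*) [Field K] [CharZero K]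
    (P : MvPolynomial (Fin 2) K)
    (hjac : psub P (-(X 2)) (X 1) * psub P (X 0) (X 2) =
      psub P (X 0 + X 1) (X 2 - X 1) * psub P (X 0) (X 1) -
        psub P (X 0 + X 2 - X 1) (X 1) * psub P (X 0) (X 2 - X 1))
    (hskew : MvPolynomial.aeval
        ![(X 0 : MvPolynomial (Fin 2) K), -(X 1) - X 0] P = -P) :
    (∃ c : K, P = MvPolynomial.C c * (X 0 + 2 * X 1)) ∧
    (P = 0 ∨ ∃ c : K, c ≠ 0 ∧ P = MvPolynomial.C c * (X 0 + 2 * X 1)) := by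
  have hj : jacobiator 0 P P = 0 := by
    rw [jacobiator, pow_zero, pow_zero, pow_zero, one_mul, one_mul, one_mul, hjac, sub_self]
  obtain ⟨c, hc⟩ := exists_eq_C_mul_of_isSkew hskew hj
  refine ⟨⟨c, hc⟩, ?_⟩
  rcases eq_or_ne c 0 with rfl | hc0
  · exact Or.inl (by rw [hc, map_zero, zero_mul])
  · exact Or.inr ⟨c, hc0, hc⟩
end
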